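/- arXiv:1601.00084 — 6 statements merged into one kernel-verified Lean document; each statement's English description precedes it below -/
import Mathlib

section
/- Let f : 𝕋ⁿ → ℂ be continuous with Fourier coefficients f_k, and let f̃_k be its discrete Fourier transform coefficients on the regular grid of size N = (N₁,...,Nₙ), i.e. f̃_k = (1/(N₁⋯Nₙ)) Σ_{0≤j<N} f(θ_j) e^{-2πi k·θ_j} with θ_j = (j₁/N₁,...,jₙ/Nₙ). Assuming the Fourier series of f converges absolutely, then f̃_k = Σ_{m∈ℤⁿ} f_{k + N(m)}, where N(m) = (N₁m₁,...,Nₙmₙ) (aliasing formula). -/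
/-!
Substituting the absolutely convergent Fourier series of `f` at each grid point and exchanging
the finite grid sum with the series, the coefficient of `fhat l` becomes the average over the
grid of the character `θ ↦ e^{2πi (l - k)·θ}`. By orthogonality of the characters of
`∏ ℤ/N_iℤ` this average is `1` when `l ≡ k` modulo `N` coordinatewise and `0` otherwise, so
only the frequencies `l = k + N(m)` survive.
-/

open Complex Finset

theorem IsPrimitiveRoot.geom_sum_zpow {K : Type*} [Field K] {ζ : K} {M : ℕ}
    (hζ : IsPrimitiveRoot ζ M) (d : ℤ) :
    ∑ j ∈ range M, (ζ ^ d) ^ j = if (M : ℤ) ∣ d then (M : K) else 0 := by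
  split_ifs with hd
  · simp [(hζ.zpow_eq_one_iff_dvd d).mpr hd]
  · have hpow : (ζ ^ d) ^ M = 1 := by
      rw [← zpow_natCast, ← zpow_mul, mul_comm, zpow_mul, zpow_natCast, hζ.pow_eq_one, one_zpow]
    rw [geom_sum_eq (mt (hζ.zpow_eq_one_iff_dvd d).mp hd), hpow, sub_self, zero_div]

theorem sum_exp_two_pi_I_mul_div {M : ℕ} (hM : M ≠ 0) (d : ℤ) :
    ∑ j : Fin M, exp (2 * Real.pi * I * d * j / M) = if (M : ℤ) ∣ d then (M : ℂ) else 0 := by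
  rw [← (isPrimitiveRoot_exp M hM).geom_sum_zpow d, ← Fin.sum_univ_eq_sum_range]
  refine sum_congr rfl fun j _ => ?_
  rw [← exp_int_mul, ← exp_nat_mul]
  ring_nf

theorem sum_pi_fin_exp_two_pi_I {ι : Type*} [Fintype ι] [DecidableEq ι] {N : ι → ℕ}
    (hN : ∀ i, N i ≠ 0) (d : ι → ℤ) :
    ∑ j : (i : ι) → Fin (N i), exp (2 * Real.pi * I * ∑ i, (d i : ℂ) * (j i : ℕ) / N i) =
      if ∀ i, (N i : ℤ) ∣ d i then ∏ i, (N i : ℂ) else 0 := by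
  simp_rw [mul_sum, exp_sum]
  rw [← Fintype.prod_sum (fun i (x : Fin (N i)) => exp (2 * Real.pi * I * (d i * x / N i))),
    ← Fintype.prod_ite_zero]
  refine prod_congr rfl fun i _ => ?_
  rw [← sum_exp_two_pi_I_mul_div (hN i)]
  simp only [mul_div_assoc, mul_assoc]

theorem hasSum_ite_forall_dvd_sub_iff {ι α : Type*} [Fintype ι] [AddCommMonoid α]
    [TopologicalSpace α] {N : ι → ℕ} (hN : ∀ i, N i ≠ 0) (k : ι → ℤ) (g : (ι → ℤ) → α) (a : α) :
    HasSum (fun l => if ∀ i, (N i : ℤ) ∣ l i - k i then g l else 0) a ↔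
      HasSum (fun m : ι → ℤ => g fun i => k i + N i * m i) a := by
  set e : (ι → ℤ) → ι → ℤ := fun m i => k i + N i * m i
  have he : Function.Injective e := fun m m' h => funext fun i =>
    mul_left_cancel₀ (by exact_mod_cast hN i) (add_left_cancel (congrFun h i))
  have hrange : ∀ l, (∀ i, (N i : ℤ) ∣ l i - k i) → l ∈ Set.range e := fun l hl =>
    ⟨fun i => (l i - k i) / N i, funext fun i => by simp [e, Int.mul_ediv_cancel' (hl i)]⟩
  rw [← he.hasSum_iff fun l hl => if_neg (mt (hrange l) hl)]
  exact Iff.of_eq <| congrArg (HasSum · a) <| funext fun m => if_pos fun i => by simp [e]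

theorem dft_aliasing_general
    (n : ℕ) (N : Fin n → ℕ) (hN : ∀ i, 0 < N i)
    (f : (Fin n → ℝ) → ℂ)
    (fhat : (Fin n → ℤ) → ℂ)
    (hexp : ∀ θ : Fin n → ℝ, HasSum
      (fun k : Fin n → ℤ =>
        fhat k * Complex.exp (2 * (Real.pi : ℂ) * Complex.I * ∑ i, (k i : ℂ) * (θ i : ℂ)))
      (f θ))
    (k : Fin n → ℤ) :
    HasSum (fun m : Fin n → ℤ => fhat fun i => k i + (N i : ℤ) * m i)
      ((1 / ∏ i, (N i : ℂ)) * ∑ j : (i : Fin n) → Fin (N i),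
        f (fun i => ((j i : ℕ) : ℝ) / (N i : ℝ)) *
          Complex.exp (-(2 * (Real.pi : ℂ) * Complex.I) *
            ∑ i, (k i : ℂ) * ((j i : ℕ) : ℂ) / (N i : ℂ))) := by
  have hN0 : ∀ i, N i ≠ 0 := fun i => (hN i).ne'
  have hP : ∏ i, (N i : ℂ) ≠ 0 := prod_ne_zero_iff.mpr fun i _ => Nat.cast_ne_zero.mpr (hN0 i)
  rw [← hasSum_ite_forall_dvd_sub_iff hN0]
  refine ((hasSum_sum fun j _ => (hexp _).mul_right _).mul_left _).congr_fun fun l => ?_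
  have hexponent : ∀ j : (i : Fin n) → Fin (N i),
      2 * Real.pi * I * ∑ i, (l i : ℂ) * (((j i : ℕ) : ℝ) / N i : ℝ) +
        -(2 * Real.pi * I) * ∑ i, (k i : ℂ) * (j i : ℕ) / N i =
      2 * Real.pi * I * ∑ i, ((l i - k i : ℤ) : ℂ) * (j i : ℕ) / N i := fun j => by
    push_cast
    rw [neg_mul, ← sub_eq_add_neg, ← mul_sub, ← sum_sub_distrib]
    exact congrArg _ (sum_congr rfl fun i _ => by ring)
  simp_rw [mul_assoc (fhat l), ← exp_add, hexponent, ← mul_sum, sum_pi_fin_exp_two_pi_I hN0]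
  split_ifs
  · field_simp
  · simp

/-- Aliasing formula: the discrete Fourier transform coefficients of `f` on the regular grid
of size `N = (N₁,…,Nₙ)` are obtained from the true Fourier coefficients by
`f̃_k = ∑_{m∈ℤⁿ} f_{k+N(m)}`. -/
theorem dft_aliasing
    (n : ℕ) (N : Fin n → ℕ) (hN : ∀ i, 0 < N i)
    (f : (Fin n → ℝ) → ℂ) (hf : Continuous f)
    (fhat : (Fin n → ℤ) → ℂ)
    (habs : Summable fun k : Fin n → ℤ => ‖fhat k‖)
    (hexp : ∀ θ : Fin n → ℝ, HasSum
      (fun k : Fin n → ℤ =>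
        fhat k * Complex.exp (2 * (Real.pi : ℂ) * Complex.I * ∑ i, (k i : ℂ) * (θ i : ℂ)))
      (f θ))
    (k : Fin n → ℤ) :
    HasSum (fun m : Fin n → ℤ => fhat fun i => k i + (N i : ℤ) * m i)
      ((1 / ∏ i, (N i : ℂ)) * ∑ j : (i : Fin n) → Fin (N i),
        f (fun i => ((j i : ℕ) : ℝ) / (N i : ℝ)) *
          Complex.exp (-(2 * (Real.pi : ℂ) * Complex.I) *
            ∑ i, (k i : ℂ) * ((j i : ℕ) : ℂ) / (N i : ℂ))) :=
  dft_aliasing_general n N hN f fhat hexp k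
end

section
/- Let f : 𝕋_ρ̂ → ℂ (n=1) be analytic and bounded on the complex strip of width ρ̂ > 0, with sup norm ‖f‖_ρ̂. Let f̃_k be the discrete Fourier transform coefficients on the regular grid of N points. Then for each integer k with -N/2 ≤ k < N/2, |f̃_k - f_k| ≤ (e^{-2πρ̂N}/(1 - e^{-2πρ̂N})) (e^{2πρ̂k} + e^{-2πρ̂k}) ‖f‖_ρ̂. -/
open Set Function MeasureTheory
open Complex (I)
open scoped Real Complex Interval

/-!
Shifting the contour of `∫₀¹ f(t) e^{-2πint} dt` to `Im z = ∓ρ` (allowed by analyticity and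
periodicity) gives `|f_n| ≤ e^{-2πρ|n|} ‖f‖_ρ`. The Fourier series therefore converges absolutely,
and evaluating it on the grid `j / N` yields the aliasing formula `f̃_k = ∑_l f_{k + N l}`.
Since `|k| ≤ N`, for `l ≠ 0` we have `|k + N l| = N |l| ± k`, so the error `∑_{l ≠ 0} f_{k + N l}`
is bounded by two geometric series of ratio `e^{-2πρN}`.
-/

/-- Cauchy's theorem on the rectangle with corners `0` and `1 + σi`, whose vertical sides cancel by
periodicity. -/
theorem intervalIntegral_add_mul_I_eq_of_periodic {g : ℂ → ℂ} (hper : ∀ z, g (z + 1) = g z)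
    {σ : ℝ} (hc : ContinuousOn g ([[0, 1]] ×ℂ [[0, σ]]))
    (hd : DifferentiableOn ℂ g (Ioo 0 1 ×ℂ Ioo (min 0 σ) (max 0 σ))) :
    ∫ t in (0:ℝ)..1, g (t + σ * I) = ∫ t in (0:ℝ)..1, g t := by
  have hrect := Complex.integral_boundary_rect_eq_zero_of_continuousOn_of_differentiableOn g 0
    (1 + σ * I) (by simpa using hc) (by simpa using hd)
  have hside : ∫ y in (0:ℝ)..σ, g (1 + y * I) = ∫ y in (0:ℝ)..σ, g (y * I) :=
    intervalIntegral.integral_congr fun y _ => by rw [add_comm, hper]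
  simp only [Complex.zero_re, Complex.zero_im, Complex.add_re, Complex.add_im, Complex.one_re,
    Complex.one_im, Complex.mul_re, Complex.mul_im, Complex.ofReal_re, Complex.ofReal_im,
    Complex.I_re, Complex.I_im, Complex.ofReal_zero, Complex.ofReal_one, mul_zero,
    mul_one, zero_add, add_zero, zero_mul, hside, sub_self, smul_eq_mul] at hrect
  linear_combination -hrect

theorem abs_lt_abs_of_mem_Ioo_min_max {y σ : ℝ} (hy : y ∈ Ioo (min 0 σ) (max 0 σ)) :
    |y| < |σ| := by
  rcases le_total 0 σ with h | h <;> simp only [h, min_eq_left, max_eq_right, min_eq_right,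
    max_eq_left, mem_Ioo] at hy <;> rw [abs_lt] <;> constructor <;>
    linarith [le_abs_self σ, neg_abs_le σ]

section Strip

variable {f : ℂ → ℂ} {ρ M : ℝ}

theorem norm_integral_mul_exp_le_exp_mul
    (hdiff : DifferentiableOn ℂ f {z : ℂ | |z.im| < ρ})
    (hcont : ContinuousOn f {z : ℂ | |z.im| ≤ ρ})
    (hper : ∀ z : ℂ, f (z + 1) = f z) (hM : ∀ z : ℂ, |z.im| ≤ ρ → ‖f z‖ ≤ M)
    (n : ℤ) {σ : ℝ} (hσ : |σ| ≤ ρ) :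
    ‖∫ t in (0:ℝ)..1, f t * cexp (-(2 * π * I) * n * t)‖ ≤ Real.exp (2 * π * n * σ) * M := by
  set g : ℂ → ℂ := fun z => f z * cexp (-(2 * π * I) * n * z)
  have hexp : Differentiable ℂ fun z : ℂ => cexp (-(2 * π * I) * n * z) := by fun_prop
  have hgper : ∀ z, g (z + 1) = g z := by
    intro z
    have : cexp (-(2 * π * I) * n * (z + 1)) = cexp (-(2 * π * I) * n * z) := by
      rw [mul_add, mul_one, Complex.exp_add, show -(2 * π * I) * n = ((-n : ℤ) : ℂ) * (2 * π * I)
        by push_cast; ring, Complex.exp_int_mul_two_pi_mul_I, mul_one]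
    simp only [g, hper, this]
  have hrect : ContinuousOn g ([[0, 1]] ×ℂ [[0, σ]]) := by
    refine (hcont.mono fun z hz => ?_).mul hexp.continuous.continuousOn
    simpa using (abs_sub_left_of_mem_uIcc hz.2).trans (by rwa [sub_zero])
  have hopen : DifferentiableOn ℂ g (Ioo 0 1 ×ℂ Ioo (min 0 σ) (max 0 σ)) := by
    refine DifferentiableOn.mul (fun z hz => ?_) hexp.differentiableOn
    have hstrip : IsOpen {z : ℂ | |z.im| < ρ} :=
      isOpen_lt (continuous_abs.comp Complex.continuous_im) continuous_const
    exact (hdiff.differentiableAt (hstrip.mem_nhds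
      ((abs_lt_abs_of_mem_Ioo_min_max hz.2).trans_le hσ))).differentiableWithinAt
  rw [← intervalIntegral_add_mul_I_eq_of_periodic hgper hrect hopen]
  have hbound : ∀ t ∈ Ι (0:ℝ) 1, ‖g (t + σ * I)‖ ≤ Real.exp (2 * π * n * σ) * M := by
    intro t _
    rw [norm_mul, Complex.norm_exp, mul_comm]
    gcongr
    · simp
    · exact hM _ (by simpa using hσ)
  simpa using intervalIntegral.norm_integral_le_of_norm_le_const hbound

theorem norm_integral_mul_exp_le_exp_neg_abs (hρ : 0 ≤ ρ)
    (hdiff : DifferentiableOn ℂ f {z : ℂ | |z.im| < ρ})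
    (hcont : ContinuousOn f {z : ℂ | |z.im| ≤ ρ})
    (hper : ∀ z : ℂ, f (z + 1) = f z) (hM : ∀ z : ℂ, |z.im| ≤ ρ → ‖f z‖ ≤ M) (n : ℤ) :
    ‖∫ t in (0:ℝ)..1, f t * cexp (-(2 * π * I) * n * t)‖
      ≤ Real.exp (-(2 * π * ρ * |(n : ℝ)|)) * M := by
  rcases le_total 0 (n : ℝ) with hn | hn
  · convert norm_integral_mul_exp_le_exp_mul hdiff hcont hper hM n (σ := -ρ)
      (by rw [abs_neg, abs_of_nonneg hρ]) using 3
    rw [abs_of_nonneg hn]; ring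
  · convert norm_integral_mul_exp_le_exp_mul hdiff hcont hper hM n (σ := ρ)
      (abs_of_nonneg hρ).le using 3
    rw [abs_of_nonpos hn]; ring

end Strip

theorem summable_exp_neg_mul_abs {a : ℝ} (ha : 0 < a) :
    Summable fun n : ℤ => Real.exp (-(a * |(n : ℝ)|)) := by
  have h : Summable fun n : ℕ => Real.exp (-(a * |((n : ℤ) : ℝ)|)) := by
    simpa [mul_comm] using Real.summable_exp_nat_mul_iff.mpr (neg_lt_zero.mpr ha)
  exact .of_nat_of_neg h (by simpa using h)

theorem hasSum_exp_add_mul_succ (x : ℝ) {y : ℝ} (hy : y < 0) :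
    HasSum (fun n : ℕ => Real.exp (x + y * (n + 1)))
      (Real.exp x * (Real.exp y / (1 - Real.exp y))) := by
  have hgeom := hasSum_geometric_of_lt_one (Real.exp_pos y).le (Real.exp_lt_one_iff.mpr hy)
  rw [mul_div_assoc', div_eq_mul_inv]
  refine (hgeom.mul_left (Real.exp x * Real.exp y)).congr_fun fun n => ?_
  rw [← Real.exp_nat_mul, ← Real.exp_add, ← Real.exp_add]
  ring_nf

theorem hasSum_exp_neg_mul_abs_add_mul {a : ℝ} (ha : 0 < a) {N : ℕ} (hN : 0 < N) {k : ℤ}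
    (hk1 : -(N : ℤ) ≤ k) (hk2 : k ≤ N) :
    HasSum (fun l : ℤ => if l = 0 then 0 else Real.exp (-(a * |((k + N * l : ℤ) : ℝ)|)))
      (Real.exp (-(a * N)) / (1 - Real.exp (-(a * N))) *
        (Real.exp (a * k) + Real.exp (-(a * k)))) := by
  set F : ℤ → ℝ := fun l => if l = 0 then 0 else Real.exp (-(a * |((k + N * l : ℤ) : ℝ)|))
  have hy : -(a * N) < 0 := neg_lt_zero.mpr (by positivity)
  have hk1' : -(N : ℝ) ≤ k := by exact_mod_cast hk1
  have hk2' : (k : ℝ) ≤ N := by exact_mod_cast hk2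
  have hpos : HasSum (fun n : ℕ => F ((n + 1 : ℕ) : ℤ))
      (Real.exp (-(a * k)) * (Real.exp (-(a * N)) / (1 - Real.exp (-(a * N))))) := by
    refine (hasSum_exp_add_mul_succ (-(a * k)) hy).congr_fun fun n => ?_
    have : (0:ℝ) ≤ k + N * (n + 1) := by nlinarith
    simp only [F]
    push_cast
    rw [if_neg (by omega), abs_of_nonneg this]
    congr 1; ring
  have hneg : HasSum (fun n : ℕ => F (-(n + 1 : ℤ)))
      (Real.exp (a * k) * (Real.exp (-(a * N)) / (1 - Real.exp (-(a * N))))) := by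
    refine (hasSum_exp_add_mul_succ (a * k) hy).congr_fun fun n => ?_
    have : (k : ℝ) + N * -(n + 1) ≤ 0 := by nlinarith
    simp only [F]
    push_cast
    rw [if_neg (by omega), abs_of_nonpos this]
    congr 1; ring
  have hnat : HasSum (fun n : ℕ => F n) _ := (hasSum_nat_add_iff (f := fun n : ℕ => F n) 1).mp hpos
  convert hnat.of_nat_of_neg_add_one hneg using 1
  rw [Finset.sum_range_one, Nat.cast_zero, show F 0 = 0 from if_pos rfl]
  ring

theorem sum_fourier_div_eq_ite {N : ℕ} (hN : N ≠ 0) (d : ℤ) :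
    ∑ j : Fin N, fourier d ((j / N : ℝ) : UnitAddCircle) = if (N : ℤ) ∣ d then (N : ℂ) else 0 := by
  have hζ := Complex.isPrimitiveRoot_exp N hN
  set ζ := cexp (2 * π * I / N)
  have hpow : ∀ j : Fin N, fourier d ((j / N : ℝ) : UnitAddCircle) = (ζ ^ d) ^ (j : ℕ) := by
    intro j
    rw [fourier_coe_apply, ← zpow_natCast, ← zpow_mul, ← Complex.exp_int_mul]
    push_cast
    ring_nf
  rw [Fintype.sum_congr _ _ hpow, Fin.sum_univ_eq_sum_range (fun j => (ζ ^ d) ^ j)]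
  split_ifs with hd
  · simp [(hζ.zpow_eq_one_iff_dvd d).mpr hd]
  · have hζd : ζ ^ d ≠ 1 := fun h => hd ((hζ.zpow_eq_one_iff_dvd d).mp h)
    rw [geom_sum_eq hζd, ← zpow_natCast, ← zpow_mul, mul_comm, zpow_mul, zpow_natCast,
      hζ.pow_eq_one, one_zpow, sub_self, zero_div]

theorem hasSum_ite_dvd_sub_iff {α : Type*} [AddCommMonoid α] [TopologicalSpace α] {f : ℤ → α}
    {N : ℤ} (hN : N ≠ 0) (k : ℤ) {a : α} :
    HasSum (fun n => if N ∣ n - k then f n else 0) a ↔ HasSum (fun l => f (k + N * l)) a := by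
  have hinj : Injective fun l : ℤ => k + N * l := fun x y h => by
    simpa [hN] using h
  rw [← hinj.hasSum_iff]
  · simp [comp_def]
  · rintro n hn
    rw [if_neg]
    rintro ⟨l, hl⟩
    exact hn ⟨l, by simp only; omega⟩

/-- The paper's `f̃_k`, computed from the samples of `F` on the grid `j / N`. -/
noncomputable def dftCoeff (N : ℕ) (F : UnitAddCircle → ℂ) (k : ℤ) : ℂ :=
  (1 / N) * ∑ j : Fin N,
    F ((j / N : ℝ) : UnitAddCircle) * fourier (-k) ((j / N : ℝ) : UnitAddCircle)

theorem hasSum_fourierCoeff_add_mul (F : C(UnitAddCircle, ℂ)) (hF : Summable (fourierCoeff F))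
    {N : ℕ} (hN : 0 < N) (k : ℤ) :
    HasSum (fun l : ℤ => fourierCoeff F (k + N * l)) (dftCoeff N F k) := by
  have hsample := hasSum_sum (s := Finset.univ) fun (j : Fin N) _ =>
    (has_pointwise_sum_fourier_series_of_summable hF ((j / N : ℝ) : UnitAddCircle)).mul_right
      (fourier (-k) ((j / N : ℝ) : UnitAddCircle))
  rw [← hasSum_ite_dvd_sub_iff (Int.natCast_ne_zero.mpr hN.ne')]
  refine (hsample.mul_left (1 / N : ℂ)).congr_fun fun n => ?_
  simp_rw [smul_eq_mul, mul_assoc, ← fourier_add, ← Finset.mul_sum, ← sub_eq_add_neg]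
  rw [sum_fourier_div_eq_ite hN.ne']
  have hN' : (N : ℂ) ≠ 0 := Nat.cast_ne_zero.mpr hN.ne'
  split_ifs
  · field_simp
  · simp

theorem norm_dftCoeff_sub_fourierCoeff_le (F : C(UnitAddCircle, ℂ)) {a M : ℝ} (ha : 0 < a)
    (hdecay : ∀ n : ℤ, ‖fourierCoeff F n‖ ≤ Real.exp (-(a * |(n : ℝ)|)) * M)
    {N : ℕ} (hN : 0 < N) {k : ℤ} (hk1 : -(N : ℤ) ≤ k) (hk2 : k ≤ N) :
    ‖dftCoeff N F k - fourierCoeff F k‖ ≤ Real.exp (-(a * N)) / (1 - Real.exp (-(a * N))) *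
      (Real.exp (a * k) + Real.exp (-(a * k))) * M := by
  have hsum : Summable (fourierCoeff F) :=
    .of_norm_bounded ((summable_exp_neg_mul_abs ha).mul_right M) hdecay
  have htail : HasSum (fun l : ℤ => if l = 0 then 0 else fourierCoeff F (k + N * l))
      (dftCoeff N F k - fourierCoeff F k) := by
    have := (hasSum_fourierCoeff_add_mul F hsum hN k).update 0 0
    rw [mul_zero, add_zero, zero_sub, neg_add_eq_sub] at this
    exact this.congr_fun fun l => by rw [update_apply]
  rw [← htail.tsum_eq]
  refine tsum_of_norm_bounded ((hasSum_exp_neg_mul_abs_add_mul ha hN hk1 hk2).mul_right M)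
    fun l => ?_
  split_ifs
  · simp
  · exact hdecay _

theorem fourierCoeff_periodic_lift {g : ℝ → ℂ} (hg : Periodic g 1) (n : ℤ) :
    fourierCoeff hg.lift n = ∫ t in (0:ℝ)..1, g t * cexp (-(2 * π * I) * n * t) := by
  rw [fourierCoeff_eq_intervalIntegral _ n 0, zero_add, div_one, one_smul]
  refine intervalIntegral.integral_congr fun t _ => ?_
  rw [Periodic.lift_coe, fourier_coe_apply, smul_eq_mul, mul_comm]
  push_cast
  ring_nf

/-- DFT coefficient error bound for a bounded analytic function on a 1-dimensional strip:
for `-N/2 ≤ k < N/2`,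
`|f̃_k − f_k| ≤ (e^{-2πρ̂N}/(1−e^{-2πρ̂N})) (e^{2πρ̂k} + e^{-2πρ̂k}) ‖f‖_ρ̂`. -/
theorem dft_coefficient_error_bound_dim_one
    (ρ' : ℝ) (hρ : 0 < ρ') (f : ℂ → ℂ)
    (hdiff : DifferentiableOn ℂ f {z : ℂ | |z.im| < ρ'})
    (hcont : ContinuousOn f {z : ℂ | |z.im| ≤ ρ'})
    (hper : ∀ z : ℂ, f (z + 1) = f z)
    (M : ℝ) (hM : ∀ z : ℂ, |z.im| ≤ ρ' → ‖f z‖ ≤ M)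
    (N : ℕ) (hN : 0 < N) (k : ℤ) (hk1 : -(N : ℤ) ≤ 2 * k) (hk2 : 2 * k < (N : ℤ)) :
    ‖(1 / (N : ℂ)) * ∑ j : Fin N, f (((j : ℕ) : ℂ) / (N : ℂ)) *
        Complex.exp (-(2 * (Real.pi : ℂ) * Complex.I) * (k : ℂ) * ((j : ℕ) : ℂ) / (N : ℂ))
      - ∫ t in (0:ℝ)..1, f (t : ℂ) *
          Complex.exp (-(2 * (Real.pi : ℂ) * Complex.I) * (k : ℂ) * (t : ℂ))‖
    ≤ Real.exp (-(2 * Real.pi * ρ' * N)) / (1 - Real.exp (-(2 * Real.pi * ρ' * N))) *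
        (Real.exp (2 * Real.pi * ρ' * k) + Real.exp (-(2 * Real.pi * ρ' * k))) * M := by
  have hg : Periodic (fun t : ℝ => f t) 1 := fun t => by simpa using hper t
  let F : C(UnitAddCircle, ℂ) := ⟨hg.lift, continuous_coinduced_dom.mpr <|
    hcont.comp_continuous Complex.continuous_ofReal fun t => by simpa using hρ.le⟩
  have hcoeff (n : ℤ) :
      fourierCoeff F n = ∫ t in (0:ℝ)..1, f t * cexp (-(2 * π * I) * n * t) :=
    fourierCoeff_periodic_lift hg n
  have hdft : (1 / (N : ℂ)) * ∑ j : Fin N, f (((j : ℕ) : ℂ) / (N : ℂ)) *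
      cexp (-(2 * π * I) * k * ((j : ℕ) : ℂ) / N) = dftCoeff N F k := by
    congr 1
    refine Finset.sum_congr rfl fun j _ => ?_
    simp only [F, ContinuousMap.coe_mk, Periodic.lift_coe, fourier_coe_apply]
    push_cast
    ring_nf
  rw [hdft, ← hcoeff]
  refine norm_dftCoeff_sub_fourierCoeff_le F (by positivity) (fun n => ?_) hN (by omega) (by omega)
  rw [hcoeff]
  exact norm_integral_mul_exp_le_exp_neg_abs hρ.le hdiff hcont hper hM n
end

section
/- Let A : 𝕋ⁿ → ℂ^{m×m} have entries analytic and bounded on the strip 𝕋ⁿ_ρ̂. Suppose X̃ is a matrix of trigonometric polynomials (supported on modes in I_N) such that A(θ_j)X̃(θ_j) = I_m at every grid point θ_j of the regular grid of size N. Then the error E(θ) = I_m − A(θ)X̃(θ) satisfies ‖E‖_ρ ≤ C_N(ρ,ρ̂)‖A‖_ρ̂‖X̃‖_ρ̂ for 0 ≤ ρ < ρ̂; moreover, if ‖E‖_ρ < 1 then A(θ) is invertible for all θ ∈ 𝕋ⁿ_ρ and ‖A^{-1} − X̃‖_ρ ≤ ‖X̃‖_ρ̂ ‖E‖_ρ /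 (1 − ‖E‖_ρ). -/
/-!
On the grid `A X̃ = I`, so every entry `(A X̃)_pq` is an analytic periodic function whose discrete
Fourier approximation is the constant `δ_pq`. The DFT error bound then gives
`|E_pq| ≤ C_N ∑_r ‖A_pr‖ ‖X̃_rq‖`, and summing over `q` bounds the row sums of `E` by
`C_N ‖A‖ ‖X̃‖`. If `‖E‖ < 1`, the Neumann series inverts `A X̃ = I - E`, so `Y = X̃ (I - E)⁻¹` is a
right inverse of `A` with `Y - X̃ = X̃ (I - E)⁻¹ E`, whence `‖Y - X̃‖ ≤ ‖X̃‖ ‖E‖ / (1 - ‖E‖)`.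
-/

open scoped BigOperators

/-- Discrete Fourier transform coefficient of `f` on the regular grid of size `N`. -/
noncomputable def dftCoef (n : ℕ) (N : Fin n → ℕ) (f : (Fin n → ℂ) → ℂ)
    (k : Fin n → ℤ) : ℂ :=
  (1 / ∏ i, (N i : ℂ)) * ∑ j : (i : Fin n) → Fin (N i),
    f (fun i => (((j i : ℕ) : ℝ) / (N i : ℝ) : ℂ)) *
      Complex.exp (-(2 * (Real.pi : ℂ) * Complex.I) *
        ∑ i, (k i : ℂ) * ((j i : ℕ) : ℂ) / (N i : ℂ))

/-- Discrete Fourier approximation of `f`. -/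
noncomputable def dftApprox (n : ℕ) (N : Fin n → ℕ) (f : (Fin n → ℂ) → ℂ)
    (z : Fin n → ℂ) : ℂ :=
  ∑ j : (i : Fin n) → Fin (N i),
    dftCoef n N f (fun i => (j i : ℤ) - (N i : ℤ) / 2) *
      Complex.exp (2 * (Real.pi : ℂ) * Complex.I *
        ∑ i, (((j i : ℤ) - (N i : ℤ) / 2 : ℤ) : ℂ) * z i)

open Complex Finset
open scoped Real

theorem sum_exp_neg_two_pi_I_mul_div (N : ℕ) (hN : N ≠ 0) (k : ℤ) :
    ∑ j : Fin N, exp (-(2 * π * I) * (k * (j : ℕ) / N)) = if (N : ℤ) ∣ k then (N : ℂ) else 0 := by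
  have hζ := isPrimitiveRoot_exp N hN
  have hterm (j : ℕ) :
      exp (-(2 * π * I) * (k * j / N)) = (exp (2 * π * I / N) ^ (-k)) ^ j := by
    rw [← zpow_natCast, ← zpow_mul, ← exp_int_mul]
    congr 1
    push_cast
    ring
  simp_rw [hterm]
  rw [Fin.sum_univ_eq_sum_range ((exp (2 * π * I / N) ^ (-k)) ^ ·)]
  split_ifs with hk
  · simp [(hζ.zpow_eq_one_iff_dvd _).2 (dvd_neg.2 hk)]
  · have hω : exp (2 * π * I / N) ^ (-k) ≠ 1 :=
      fun h => hk (dvd_neg.1 ((hζ.zpow_eq_one_iff_dvd _).1 h))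
    have hωN : (exp (2 * π * I / N) ^ (-k)) ^ N = 1 := by
      rw [← zpow_natCast, ← zpow_mul]
      exact (hζ.zpow_eq_one_iff_dvd _).2 (dvd_mul_left _ _)
    rw [geom_sum_eq hω, hωN, sub_self, zero_div]

theorem intCast_dvd_sub_half_iff {N j : ℕ} (hj : j < N) : (N : ℤ) ∣ j - N / 2 ↔ j = N / 2 := by
  constructor
  · intro h
    have := Int.eq_zero_of_abs_lt_dvd h (by rw [abs_lt]; omega)
    omega
  · intro h
    simp [h]

noncomputable def fourierMode {n : ℕ} (k : Fin n → ℤ) (z : Fin n → ℂ) : ℂ :=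
  exp (2 * π * I * ∑ i, (k i : ℂ) * z i)

theorem differentiable_fourierMode {n : ℕ} (k : Fin n → ℤ) : Differentiable ℂ (fourierMode k) := by
  unfold fourierMode
  fun_prop

theorem differentiable_sum_fourierMode_smul {n : ℕ} {ι E : Type*} [NormedAddCommGroup E]
    [NormedSpace ℂ E] (s : Finset ι) (k : ι → Fin n → ℤ) (c : ι → E) :
    Differentiable ℂ fun z => ∑ j ∈ s, fourierMode (k j) z • c j :=
  Differentiable.fun_sum fun j _ => (differentiable_fourierMode (k j)).smul_const (c j)

theorem fourierMode_add_intCast {n : ℕ} (k : Fin n → ℤ) (z : Fin n → ℂ) (e : Fin n → ℤ) :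
    fourierMode k (z + fun i => (e i : ℂ)) = fourierMode k z := by
  have hsplit : ∑ i, (k i : ℂ) * (z + fun i => (e i : ℂ)) i =
      ∑ i, (k i : ℂ) * z i + ((∑ i, k i * e i : ℤ) : ℂ) := by
    push_cast
    simp only [Pi.add_apply, mul_add, sum_add_distrib]
  rw [fourierMode, fourierMode, hsplit, mul_add, exp_add, mul_comm _ ((_ : ℤ) : ℂ),
    exp_int_mul_two_pi_mul_I, mul_one]

section DiscreteFourier

variable {n : ℕ} {N : Fin n → ℕ}

-- `j ↦ dftMode N j` enumerates the modes `I_N = ∏ i, {-⌊N i / 2⌋, …, N i - 1 - ⌊N i / 2⌋}`.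
def dftMode (N : Fin n → ℕ) (j : (i : Fin n) → Fin (N i)) (i : Fin n) : ℤ :=
  (j i : ℤ) - (N i : ℤ) / 2

noncomputable def gridPoint (N : Fin n → ℕ) (j : (i : Fin n) → Fin (N i)) (i : Fin n) : ℂ :=
  (((j i : ℕ) : ℝ) / (N i : ℝ) : ℂ)

theorem dvd_dftMode_iff (j : (i : Fin n) → Fin (N i)) :
    (∀ i, (N i : ℤ) ∣ dftMode N j i) ↔ ∀ i, (j i : ℕ) = N i / 2 := by
  simp only [dftMode, intCast_dvd_sub_half_iff (j _).isLt]

theorem dftApprox_eq_sum (f : (Fin n → ℂ) → ℂ) (z : Fin n → ℂ) :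
    dftApprox n N f z = ∑ j, dftCoef n N f (dftMode N j) * fourierMode (dftMode N j) z :=
  rfl

theorem dftCoef_const (hN : ∀ i, N i ≠ 0) (c : ℂ) (k : Fin n → ℤ) :
    dftCoef n N (fun _ => c) k = if ∀ i, (N i : ℤ) ∣ k i then c else 0 := by
  have hprod : ∀ j : (i : Fin n) → Fin (N i),
      exp (-(2 * π * I) * ∑ i, (k i : ℂ) * ((j i : ℕ) : ℂ) / (N i : ℂ)) =
        ∏ i, exp (-(2 * π * I) * ((k i : ℂ) * ((j i : ℕ) : ℂ) / (N i : ℂ))) := by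
    intro j
    rw [← exp_sum, mul_sum]
  have hN' : (∏ i, (N i : ℂ)) ≠ 0 := prod_ne_zero_iff.2 fun i _ => Nat.cast_ne_zero.2 (hN i)
  simp only [dftCoef, hprod, ← mul_sum]
  rw [← Fintype.prod_sum (fun i (x : Fin (N i)) => exp (-(2 * π * I) * ((k i : ℂ) * (x : ℕ) / N i)))]
  simp only [fun i => sum_exp_neg_two_pi_I_mul_div (N i) (hN i) (k i), Fintype.prod_ite_zero]
  split_ifs
  · field_simp
  · simp

theorem dftApprox_const (hN : ∀ i, N i ≠ 0) (c : ℂ) (z : Fin n → ℂ) :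
    dftApprox n N (fun _ => c) z = c := by
  let center : (i : Fin n) → Fin (N i) := fun i => ⟨N i / 2, by have := hN i; omega⟩
  have hcenter : dftMode N center = 0 := by
    ext i
    simp [center, dftMode]
  have hother (j) (hj : j ≠ center) : ¬∀ i, (j i : ℕ) = N i / 2 :=
    fun h => hj (funext fun i => Fin.ext (h i))
  rw [dftApprox_eq_sum, Fintype.sum_eq_single center fun j hj => by
    simp [dftCoef_const hN, dvd_dftMode_iff, hother j hj]]
  simp [dftCoef_const hN, hcenter, fourierMode]

theorem dftApprox_eq_of_forall_gridPoint_eq (hN : ∀ i, N i ≠ 0) {f : (Fin n → ℂ) → ℂ} {c : ℂ}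
    (hf : ∀ j, f (gridPoint N j) = c) (z : Fin n → ℂ) : dftApprox n N f z = c := by
  have hf' : ∀ j : (i : Fin n) → Fin (N i), f (fun i => (((j i : ℕ) : ℝ) / (N i : ℝ) : ℂ)) = c := hf
  rw [← dftApprox_const hN c z]
  simp only [dftApprox, dftCoef, hf']

end DiscreteFourier

theorem exists_mul_eq_one_norm_sub_le {R : Type*} [NormedRing R] [NormOneClass R] [CompleteSpace R]
    {a x : R} {e : ℝ} (he : ‖1 - a * x‖ ≤ e) (he1 : e < 1) :
    ∃ y, a * y = 1 ∧ ‖y - x‖ ≤ ‖x‖ * e / (1 - e) := by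
  set E := 1 - a * x
  have hE : ‖E‖ < 1 := he.trans_lt he1
  -- `a * x = 1 - E` is inverted by the Neumann series `∑ Eᵏ`
  let u := Units.oneSub E hE
  have hu : (u : R) = a * x := sub_sub_cancel 1 (a * x)
  have hu_inv : ‖(↑u⁻¹ : R)‖ ≤ (1 - e)⁻¹ :=
    calc ‖∑' k : ℕ, E ^ k‖ ≤ ‖(1 : R)‖ - 1 + (1 - ‖E‖)⁻¹ := tsum_geometric_le_of_norm_lt_one E hE
      _ = (1 - ‖E‖)⁻¹ := by rw [norm_one, sub_self, zero_add]
      _ ≤ (1 - e)⁻¹ := inv_anti₀ (by linarith) (by linarith)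
  refine ⟨x * ↑u⁻¹, by rw [← mul_assoc, ← hu, u.mul_inv], ?_⟩
  have hdiff : x * ↑u⁻¹ - x = x * (↑u⁻¹ * E) := by
    rw [show E = 1 - (u : R) by rw [hu], mul_sub, mul_one, u.inv_mul, mul_sub, mul_one]
  calc ‖x * ↑u⁻¹ - x‖ ≤ ‖x‖ * (‖(↑u⁻¹ : R)‖ * ‖E‖) := by
        rw [hdiff]
        exact (norm_mul_le _ _).trans (by gcongr; exact norm_mul_le _ _)
    _ ≤ ‖x‖ * ((1 - e)⁻¹ * e) := by gcongr
    _ = ‖x‖ * e / (1 - e) := by ring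

theorem sum_sum_mul_le {l m o : Type*} [Fintype m] [Fintype o] {a : l → m → ℝ} {b : m → o → ℝ}
    {α β : ℝ} (ha : ∀ p r, 0 ≤ a p r) (hα : ∀ p, ∑ r, a p r ≤ α) (hβ : ∀ r, ∑ q, b r q ≤ β)
    (hβ₀ : 0 ≤ β) (p : l) : ∑ q, ∑ r, a p r * b r q ≤ α * β :=
  calc ∑ q, ∑ r, a p r * b r q = ∑ r, a p r * ∑ q, b r q := by
        simp only [mul_sum]
        exact sum_comm
    _ ≤ ∑ r, a p r * β := sum_le_sum fun r _ => mul_le_mul_of_nonneg_left (hβ r) (ha p r)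
    _ = (∑ r, a p r) * β := (sum_mul _ _ _).symm
    _ ≤ α * β := mul_le_mul_of_nonneg_right (hα p) hβ₀

namespace Matrix

variable {l m o α : Type*} [Fintype m]

theorem norm_mul_apply_le_of_le [NormedRing α] {A : Matrix l m α} {B : Matrix m o α}
    {MA : l → m → ℝ} {MB : m → o → ℝ} (hA : ∀ p r, ‖A p r‖ ≤ MA p r)
    (hB : ∀ r q, ‖B r q‖ ≤ MB r q) (p : l) (q : o) : ‖(A * B) p q‖ ≤ ∑ r, MA p r * MB r q :=
  (norm_sum_le _ _).trans <| sum_le_sum fun r _ => (norm_mul_le _ _).trans <|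
    mul_le_mul (hA p r) (hB r q) (norm_nonneg _) ((norm_nonneg _).trans (hA p r))

attribute [local instance] Matrix.linftyOpSeminormedAddCommGroup

theorem linfty_opNorm_le_of_sum_le [Fintype l] [SeminormedAddCommGroup α] {M : Matrix l m α}
    {b : ℝ} (hb : 0 ≤ b) (h : ∀ p, ∑ q, ‖M p q‖ ≤ b) : ‖M‖ ≤ b := by
  change ‖fun p => WithLp.toLp 1 (M p)‖ ≤ b
  refine (pi_norm_le_iff_of_nonneg hb).2 fun p => ?_
  simpa [PiLp.norm_eq_of_L1] using h p

theorem sum_norm_le_linfty_opNorm [Fintype l] [SeminormedAddCommGroup α] (M : Matrix l m α)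
    (p : l) : ∑ q, ‖M p q‖ ≤ ‖M‖ := by
  change _ ≤ ‖fun p => WithLp.toLp 1 (M p)‖
  simpa [PiLp.norm_eq_of_L1] using norm_le_pi_norm (fun p => WithLp.toLp 1 (M p)) p

end Matrix

section LinftyOpNorm

attribute [local instance] Matrix.linftyOpNormedRing Matrix.linftyOpNormedAlgebra

theorem Matrix.isUnit_and_sum_norm_inv_sub_le {ι 𝕜 : Type*} [Fintype ι] [DecidableEq ι]
    [Nonempty ι] [RCLike 𝕜] {A X : Matrix ι ι 𝕜} {e MX : ℝ}
    (hE : ∀ p, ∑ q, ‖(1 - A * X) p q‖ ≤ e) (he1 : e < 1) (hX : ∀ p, ∑ q, ‖X p q‖ ≤ MX) :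
    IsUnit A ∧ ∀ p, ∑ q, ‖(A⁻¹ - X) p q‖ ≤ MX * e / (1 - e) := by
  obtain ⟨p₀⟩ := ‹Nonempty ι›
  have he0 : 0 ≤ e := (sum_nonneg fun q _ => norm_nonneg _).trans (hE p₀)
  have hMX0 : 0 ≤ MX := (sum_nonneg fun q _ => norm_nonneg _).trans (hX p₀)
  obtain ⟨Y, hAY, hY⟩ := exists_mul_eq_one_norm_sub_le (linfty_opNorm_le_of_sum_le he0 hE) he1
  refine ⟨(isUnit_iff_isUnit_det _).2 (isUnit_det_of_right_inverse hAY), fun p => ?_⟩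
  rw [inv_eq_right_inv hAY]
  calc ∑ q, ‖(Y - X) p q‖ ≤ ‖Y - X‖ := sum_norm_le_linfty_opNorm _ p
    _ ≤ ‖X‖ * e / (1 - e) := hY
    _ ≤ MX * e / (1 - e) := by gcongr; exact linfty_opNorm_le_of_sum_le hMX0 hX

end LinftyOpNorm

def IsDftErrorConstant (n : ℕ) (N : Fin n → ℕ) (ρ ρ' C : ℝ) : Prop :=
  ∀ (g : (Fin n → ℂ) → ℂ) (Mg : ℝ),
    DifferentiableOn ℂ g {z | ∀ i, |(z i).im| < ρ'} →
    (∀ (z : Fin n → ℂ) (e : Fin n → ℤ), g (z + fun i => (e i : ℂ)) = g z) →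
    (∀ z : Fin n → ℂ, (∀ i, |(z i).im| < ρ') → ‖g z‖ ≤ Mg) →
    ∀ z : Fin n → ℂ, (∀ i, |(z i).im| ≤ ρ) →
      ‖dftApprox n N g z - g z‖ ≤ C * Mg

namespace IsDftErrorConstant

variable {n : ℕ} {N : Fin n → ℕ} {ρ ρ' C : ℝ}

theorem norm_sub_le_of_forall_gridPoint_eq (hC : IsDftErrorConstant n N ρ ρ' C)
    (hN : ∀ i, N i ≠ 0) {g : (Fin n → ℂ) → ℂ} {Mg : ℝ} {c : ℂ}
    (hg : DifferentiableOn ℂ g {z | ∀ i, |(z i).im| < ρ'})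
    (hper : ∀ (z : Fin n → ℂ) (e : Fin n → ℤ), g (z + fun i => (e i : ℂ)) = g z)
    (hbound : ∀ z : Fin n → ℂ, (∀ i, |(z i).im| < ρ') → ‖g z‖ ≤ Mg)
    (hgrid : ∀ j, g (gridPoint N j) = c) {z : Fin n → ℂ} (hz : ∀ i, |(z i).im| ≤ ρ) :
    ‖c - g z‖ ≤ C * Mg := by
  simpa only [dftApprox_eq_of_forall_gridPoint_eq hN hgrid] using hC g Mg hg hper hbound z hz

theorem nonneg (hC : IsDftErrorConstant n N ρ ρ' C) (hN : ∀ i, N i ≠ 0) (hρ : 0 ≤ ρ) : 0 ≤ C := by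
  simpa using hC.norm_sub_le_of_forall_gridPoint_eq hN (g := fun _ => 1) (c := 1) (Mg := 1)
    (differentiableOn_const 1) (fun _ _ => rfl) (fun _ _ => norm_one.le) (fun _ => rfl)
    (z := 0) (fun _ => by simpa using hρ)

theorem norm_one_sub_mul_apply_le {ι : Type*} [Fintype ι] [DecidableEq ι]
    (hC : IsDftErrorConstant n N ρ ρ' C) (hN : ∀ i, N i ≠ 0)
    {A B : (Fin n → ℂ) → Matrix ι ι ℂ} {MA MB : ι → ι → ℝ}
    (hA : ∀ p q, DifferentiableOn ℂ (fun z => A z p q) {z | ∀ i, |(z i).im| < ρ'})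
    (hB : ∀ p q, DifferentiableOn ℂ (fun z => B z p q) {z | ∀ i, |(z i).im| < ρ'})
    (hAper : ∀ (z : Fin n → ℂ) (e : Fin n → ℤ), A (z + fun i => (e i : ℂ)) = A z)
    (hBper : ∀ (z : Fin n → ℂ) (e : Fin n → ℤ), B (z + fun i => (e i : ℂ)) = B z)
    (hAb : ∀ z : Fin n → ℂ, (∀ i, |(z i).im| < ρ') → ∀ p q, ‖A z p q‖ ≤ MA p q)
    (hBb : ∀ z : Fin n → ℂ, (∀ i, |(z i).im| < ρ') → ∀ p q, ‖B z p q‖ ≤ MB p q)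
    (hgrid : ∀ j, A (gridPoint N j) * B (gridPoint N j) = 1)
    {z : Fin n → ℂ} (hz : ∀ i, |(z i).im| ≤ ρ) (p q : ι) :
    ‖(1 - A z * B z) p q‖ ≤ C * ∑ r, MA p r * MB r q := by
  have hAB : DifferentiableOn ℂ (fun w => (A w * B w) p q) {z | ∀ i, |(z i).im| < ρ'} := by
    simp only [Matrix.mul_apply]
    exact DifferentiableOn.fun_sum fun r _ => (hA p r).mul (hB r q)
  rw [Matrix.sub_apply]
  exact hC.norm_sub_le_of_forall_gridPoint_eq hN hAB (fun w e => by simp only [hAper, hBper])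
    (fun w hw => Matrix.norm_mul_apply_le_of_le (hAb w hw) (hBb w hw) p q)
    (fun j => by rw [hgrid j]) hz

end IsDftErrorConstant

theorem matrix_inverse_validation_general
    (n m : ℕ) (hm : 0 < m) (N : Fin n → ℕ) (hN : ∀ i, 0 < N i)
    (ρ ρ' : ℝ) (h0 : 0 ≤ ρ) (hρ : ρ < ρ') (C : ℝ)
    -- `C` is a discrete-Fourier-approximation error constant for analytic functions
    (hC : ∀ (g : (Fin n → ℂ) → ℂ) (Mg : ℝ),
      DifferentiableOn ℂ g {z | ∀ i, |(z i).im| < ρ'} →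
      (∀ (z : Fin n → ℂ) (e : Fin n → ℤ), g (z + fun i => (e i : ℂ)) = g z) →
      (∀ z : Fin n → ℂ, (∀ i, |(z i).im| < ρ') → ‖g z‖ ≤ Mg) →
      ∀ z : Fin n → ℂ, (∀ i, |(z i).im| ≤ ρ) →
        ‖dftApprox n N g z - g z‖ ≤ C * Mg)
    (A : (Fin n → ℂ) → Matrix (Fin m) (Fin m) ℂ)
    (hA : ∀ p q, DifferentiableOn ℂ (fun z => A z p q) {z | ∀ i, |(z i).im| < ρ'})
    (hAper : ∀ (z : Fin n → ℂ) (e : Fin n → ℤ), A (z + fun i => (e i : ℂ)) = A z)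
    -- entrywise sup bounds of `A` on the strip, whose row sums give `‖A‖_ρ̂ ≤ MA`
    (MAe : Fin m → Fin m → ℝ)
    (hMAe : ∀ z : Fin n → ℂ, (∀ i, |(z i).im| < ρ') → ∀ p q, ‖A z p q‖ ≤ MAe p q)
    (MA : ℝ) (hMA : ∀ p, ∑ q, MAe p q ≤ MA)
    -- `X̃` is a matrix of trigonometric polynomials supported on the modes in `I_N`
    (c : ((i : Fin n) → Fin (N i)) → Matrix (Fin m) (Fin m) ℂ)
    (X : (Fin n → ℂ) → Matrix (Fin m) (Fin m) ℂ)
    (hX : ∀ z, X z = ∑ j : (i : Fin n) → Fin (N i),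
      Complex.exp (2 * (Real.pi : ℂ) * Complex.I *
        ∑ i, (((j i : ℤ) - (N i : ℤ) / 2 : ℤ) : ℂ) * z i) • c j)
    (MXe : Fin m → Fin m → ℝ)
    (hMXe : ∀ z : Fin n → ℂ, (∀ i, |(z i).im| < ρ') → ∀ p q, ‖X z p q‖ ≤ MXe p q)
    (MX : ℝ) (hMX : ∀ p, ∑ q, MXe p q ≤ MX)
    -- interpolation of the identity at all grid points
    (hinterp : ∀ j : (i : Fin n) → Fin (N i),
      A (fun i => (((j i : ℕ) : ℝ) / (N i : ℝ) : ℂ)) *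
        X (fun i => (((j i : ℕ) : ℝ) / (N i : ℝ) : ℂ)) = 1) :
    (∀ p : Fin m,
      ∑ q, ⨆ z : {z : Fin n → ℂ // ∀ i, |(z i).im| ≤ ρ},
        ‖(1 - A z.1 * X z.1) p q‖ ≤ C * MA * MX) ∧
    (∀ e : ℝ,
      (∀ z : Fin n → ℂ, (∀ i, |(z i).im| ≤ ρ) → ∀ p,
        ∑ q, ‖(1 - A z * X z) p q‖ ≤ e) →
      e < 1 →
      ∀ z : Fin n → ℂ, (∀ i, |(z i).im| ≤ ρ) →
        IsUnit (A z) ∧ ∀ p, ∑ q, ‖((A z)⁻¹ - X z) p q‖ ≤ MX * e / (1 - e)) := by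
  have hC' : IsDftErrorConstant n N ρ ρ' C := hC
  have hN' : ∀ i, N i ≠ 0 := fun i => (hN i).ne'
  have hstrip : ∀ z : Fin n → ℂ, (∀ i, |(z i).im| ≤ ρ) → ∀ i, |(z i).im| < ρ' :=
    fun z hz i => (hz i).trans_lt hρ
  have h0strip : ∀ i, |((0 : Fin n → ℂ) i).im| ≤ ρ := fun _ => by simpa using h0
  have hXmodes : X = fun z => ∑ j, fourierMode (dftMode N j) z • c j := funext hX
  have hXdiff (r q) : DifferentiableOn ℂ (fun z => X z r q) {z | ∀ i, |(z i).im| < ρ'} := by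
    simp only [hXmodes, Matrix.sum_apply, Matrix.smul_apply]
    exact (differentiable_sum_fourierMode_smul _ _ _).differentiableOn
  have hXper (z : Fin n → ℂ) (e : Fin n → ℤ) : X (z + fun i => (e i : ℂ)) = X z := by
    simp only [hXmodes, fourierMode_add_intCast]
  have hE (z) (hz : ∀ i, |(z i).im| ≤ ρ) (p q) : ‖(1 - A z * X z) p q‖ ≤ C * ∑ r, MAe p r * MXe r q :=
    hC'.norm_one_sub_mul_apply_le hN' hA hXdiff hAper hXper hMAe hMXe hinterp hz p q
  refine ⟨fun p => ?_, fun e he he1 z hz => ?_⟩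
  · have : Nonempty {z : Fin n → ℂ // ∀ i, |(z i).im| ≤ ρ} := ⟨⟨0, h0strip⟩⟩
    have hMAe0 (p q) : 0 ≤ MAe p q := (norm_nonneg _).trans (hMAe 0 (hstrip 0 h0strip) p q)
    have hMX0 : 0 ≤ MX := (sum_nonneg fun q _ =>
      (norm_nonneg _).trans (hMXe 0 (hstrip 0 h0strip) p q)).trans (hMX p)
    calc ∑ q, ⨆ z : {z : Fin n → ℂ // ∀ i, |(z i).im| ≤ ρ}, ‖(1 - A z.1 * X z.1) p q‖
        ≤ ∑ q, C * ∑ r, MAe p r * MXe r q := sum_le_sum fun q _ => ciSup_le fun z => hE z.1 z.2 p q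
      _ = C * ∑ q, ∑ r, MAe p r * MXe r q := (mul_sum _ _ _).symm
      _ ≤ C * (MA * MX) := mul_le_mul_of_nonneg_left (sum_sum_mul_le hMAe0 hMA hMX hMX0 p)
          (hC'.nonneg hN' h0)
      _ = C * MA * MX := (mul_assoc _ _ _).symm
  · have : Nonempty (Fin m) := ⟨⟨0, hm⟩⟩
    exact Matrix.isUnit_and_sum_norm_inv_sub_le (he z hz) he1 fun p =>
      (sum_le_sum fun q _ => hMXe z (hstrip z hz) p q).trans (hMX p)

/-- Validation of approximate inverses of analytic matrix functions: if the trigonometric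
polynomial matrix `X̃` satisfies `A X̃ = I` on the grid, then `E = I − A X̃` satisfies
`‖E‖_ρ ≤ C_N(ρ,ρ̂)‖A‖_ρ̂‖X̃‖_ρ̂`, and if `‖E‖_ρ < 1` then `A` is invertible on the strip with
`‖A⁻¹ − X̃‖_ρ ≤ ‖X̃‖_ρ̂ ‖E‖_ρ/(1 − ‖E‖_ρ)`. -/
theorem matrix_inverse_validation
    (n m : ℕ) (hn : 0 < n) (hm : 0 < m) (N : Fin n → ℕ) (hN : ∀ i, 0 < N i)
    (ρ ρ' : ℝ) (h0 : 0 ≤ ρ) (hρ : ρ < ρ') (C : ℝ)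
    -- `C` is a discrete-Fourier-approximation error constant for analytic functions
    (hC : ∀ (g : (Fin n → ℂ) → ℂ) (Mg : ℝ),
      DifferentiableOn ℂ g {z | ∀ i, |(z i).im| < ρ'} →
      (∀ (z : Fin n → ℂ) (e : Fin n → ℤ), g (z + fun i => (e i : ℂ)) = g z) →
      (∀ z : Fin n → ℂ, (∀ i, |(z i).im| < ρ') → ‖g z‖ ≤ Mg) →
      ∀ z : Fin n → ℂ, (∀ i, |(z i).im| ≤ ρ) →
        ‖dftApprox n N g z - g z‖ ≤ C * Mg)
    (A : (Fin n → ℂ) → Matrix (Fin m) (Fin m) ℂ)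
    (hA : ∀ p q, DifferentiableOn ℂ (fun z => A z p q) {z | ∀ i, |(z i).im| < ρ'})
    (hAper : ∀ (z : Fin n → ℂ) (e : Fin n → ℤ), A (z + fun i => (e i : ℂ)) = A z)
    -- entrywise sup bounds of `A` on the strip, whose row sums give `‖A‖_ρ̂ ≤ MA`
    (MAe : Fin m → Fin m → ℝ)
    (hMAe : ∀ z : Fin n → ℂ, (∀ i, |(z i).im| < ρ') → ∀ p q, ‖A z p q‖ ≤ MAe p q)
    (MA : ℝ) (hMA : ∀ p, ∑ q, MAe p q ≤ MA)
    -- `X̃` is a matrix of trigonometric polynomials supported on the modes in `I_N`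
    (c : ((i : Fin n) → Fin (N i)) → Matrix (Fin m) (Fin m) ℂ)
    (X : (Fin n → ℂ) → Matrix (Fin m) (Fin m) ℂ)
    (hX : ∀ z, X z = ∑ j : (i : Fin n) → Fin (N i),
      Complex.exp (2 * (Real.pi : ℂ) * Complex.I *
        ∑ i, (((j i : ℤ) - (N i : ℤ) / 2 : ℤ) : ℂ) * z i) • c j)
    (MXe : Fin m → Fin m → ℝ)
    (hMXe : ∀ z : Fin n → ℂ, (∀ i, |(z i).im| < ρ') → ∀ p q, ‖X z p q‖ ≤ MXe p q)
    (MX : ℝ) (hMX : ∀ p, ∑ q, MXe p q ≤ MX)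
    -- interpolation of the identity at all grid points
    (hinterp : ∀ j : (i : Fin n) → Fin (N i),
      A (fun i => (((j i : ℕ) : ℝ) / (N i : ℝ) : ℂ)) *
        X (fun i => (((j i : ℕ) : ℝ) / (N i : ℝ) : ℂ)) = 1) :
    (∀ p : Fin m,
      ∑ q, ⨆ z : {z : Fin n → ℂ // ∀ i, |(z i).im| ≤ ρ},
        ‖(1 - A z.1 * X z.1) p q‖ ≤ C * MA * MX) ∧
    (∀ e : ℝ,
      (∀ z : Fin n → ℂ, (∀ i, |(z i).im| ≤ ρ) → ∀ p,
        ∑ q, ‖(1 - A z * X z) p q‖ ≤ e) →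
      e < 1 →
      ∀ z : Fin n → ℂ, (∀ i, |(z i).im| ≤ ρ) →
        IsUnit (A z) ∧ ∀ p, ∑ q, ‖((A z)⁻¹ - X z) p q‖ ≤ MX * e / (1 - e)) :=
  matrix_inverse_validation_general n m hm N hN ρ ρ' h0 hρ C hC A hA hAper MAe hMAe MA hMA c X hX
    MXe hMXe MX hMX hinterp
end

section
/- Ordered small divisor bound: Let ω ∈ ℝⁿ be (γ,τ)-Diophantine and for ℓ ∈ ℕ let D_ℓ = {k ∈ ℤⁿ\{0} : |k|₁ ≤ ℓ, d_k > 0} where d_k = k·ω − m_k with |d_k| = min_{m∈ℤ}|k·ω − m|. Sorting 0 < d_{k₁} < d_{k₂} < ⋯ < d_{k_{#D_ℓ}}, one has d_{k_j} ≥ (j−1)γ(2ℓ)^{−τ} + γℓ^{−τ} for each j, and consequently Σ_{j=1}^{#D_ℓ} d_{k_j}^{−2} ≤ 2^{2τ} ζ(2, 2^τ) ℓ^{2τ}/γ². -/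
/-!
The difference of two small divisors `d_k < d_{k'}` with `|k|₁, |k'|₁ ≤ ℓ` is, up to an integer,
`(k' - k)·ω` with `|k' - k|₁ ≤ 2ℓ`, so the Diophantine condition separates consecutive divisors by
at least `γ(2ℓ)^{-τ}`, while the smallest one is at least `γℓ^{-τ} = 2^τ · γ(2ℓ)^{-τ}`. Hence
`d_{k_j} ≥ γ(2ℓ)^{-τ}(2^τ + j)` (counting from `j = 0`), and the inverse squares sum to at most
`(2ℓ)^{2τ}/γ² · ζ(2, 2^τ)`.
-/

open Finset

variable {ι : Type*} [Fintype ι]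

def IsDiophantine (γ τ : ℝ) (ω : ι → ℝ) : Prop :=
  ∀ k : ι → ℤ, k ≠ 0 → ∀ m : ℤ,
    γ * (∑ i, |(k i : ℝ)|) ^ (-τ) ≤ |(∑ i, (k i : ℝ) * ω i) - (m : ℝ)|

lemma one_le_sum_abs_intCast {k : ι → ℤ} (hk : k ≠ 0) : 1 ≤ ∑ i, |(k i : ℝ)| := by
  obtain ⟨i, hi⟩ := Function.ne_iff.mp hk
  calc (1 : ℝ) ≤ |(k i : ℝ)| := by exact_mod_cast Int.one_le_abs hi
    _ ≤ ∑ i, |(k i : ℝ)| := single_le_sum (fun j _ => abs_nonneg (k j : ℝ)) (mem_univ i)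

namespace IsDiophantine

variable {γ τ B : ℝ} {ω : ι → ℝ}

lemma mul_rpow_neg_le_abs (h : IsDiophantine γ τ ω) (hγ : 0 ≤ γ) (hτ : 0 ≤ τ)
    {k : ι → ℤ} (hk : k ≠ 0) (hkB : ∑ i, |(k i : ℝ)| ≤ B) (m : ℤ) :
    γ * B ^ (-τ) ≤ |(∑ i, (k i : ℝ) * ω i) - m| :=
  calc γ * B ^ (-τ) ≤ γ * (∑ i, |(k i : ℝ)|) ^ (-τ) :=
        mul_le_mul_of_nonneg_left (Real.rpow_le_rpow_of_nonpos
          (one_pos.trans_le (one_le_sum_abs_intCast hk)) hkB (neg_nonpos.mpr hτ)) hγ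
    _ ≤ _ := h k hk m

lemma mul_rpow_neg_le_sub (h : IsDiophantine γ τ ω) (hγ : 0 ≤ γ) (hτ : 0 ≤ τ)
    {k k' : ι → ℤ} (hne : k ≠ k') (hk : ∑ i, |(k i : ℝ)| ≤ B) (hk' : ∑ i, |(k' i : ℝ)| ≤ B)
    {m m' : ℤ} (hlt : (∑ i, (k i : ℝ) * ω i) - m < (∑ i, (k' i : ℝ) * ω i) - m') :
    γ * (2 * B) ^ (-τ) ≤ ((∑ i, (k' i : ℝ) * ω i) - m') - ((∑ i, (k i : ℝ) * ω i) - m) := by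
  have hsub : ((∑ i, (k' i : ℝ) * ω i) - m') - ((∑ i, (k i : ℝ) * ω i) - m) =
      (∑ i, ((k' - k) i : ℝ) * ω i) - ((m' - m : ℤ) : ℝ) := by
    simp only [Pi.sub_apply, Int.cast_sub, sub_mul, sum_sub_distrib]
    ring
  have hsum : ∑ i, |((k' - k) i : ℝ)| ≤ 2 * B :=
    calc ∑ i, |((k' - k) i : ℝ)| ≤ ∑ i, (|(k' i : ℝ)| + |(k i : ℝ)|) := by
          gcongr with i
          rw [Pi.sub_apply, Int.cast_sub]
          exact abs_sub _ _
      _ ≤ 2 * B := by rw [sum_add_distrib]; linarith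
  have := h.mul_rpow_neg_le_abs hγ hτ (sub_ne_zero.mpr hne.symm) hsum (m' - m)
  rwa [← hsub, abs_of_pos (sub_pos.mpr hlt)] at this

end IsDiophantine

lemma Fin.natCast_mul_add_le_of_forall_lt {J : ℕ} {d : Fin J → ℝ} {a δ : ℝ}
    (h₀ : ∀ j, a ≤ d j) (hgap : ∀ i j : Fin J, i < j → δ ≤ d j - d i) (j : Fin J) :
    (j : ℝ) * δ + a ≤ d j := by
  obtain ⟨j, hj⟩ := j
  induction j with
  | zero => simpa using h₀ _
  | succ j ih =>
    have := hgap ⟨j, by omega⟩ ⟨j + 1, hj⟩ (by simp [Fin.lt_def])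
    have := ih (by omega)
    push_cast
    linarith

lemma summable_one_div_add_natCast_sq {a : ℝ} (ha : 0 < a) :
    Summable fun j : ℕ => 1 / (a + j) ^ 2 :=
  ((Real.summable_one_div_nat_add_rpow a 2).mpr one_lt_two).congr fun j => by
    rw [abs_of_pos (by positivity), Real.rpow_two, add_comm]

lemma sum_one_div_sq_le_tsum_div {J : ℕ} {d : Fin J → ℝ} {a c : ℝ} (ha : 0 < a) (hc : 0 < c)
    (hd : ∀ j : Fin J, c * (a + j) ≤ d j) :
    ∑ j, 1 / d j ^ 2 ≤ (∑' j : ℕ, 1 / (a + j) ^ 2) / c ^ 2 :=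
  calc ∑ j, 1 / d j ^ 2 ≤ ∑ j : Fin J, 1 / (a + j) ^ 2 / c ^ 2 := by
        refine sum_le_sum fun j _ => ?_
        rw [div_div, ← mul_pow, mul_comm]
        exact one_div_le_one_div_of_le (by positivity) (pow_le_pow_left₀ (by positivity) (hd j) 2)
    _ = (∑ j ∈ range J, 1 / (a + j) ^ 2) / c ^ 2 := by
        rw [← sum_div, Fin.sum_univ_eq_sum_range (fun j => 1 / (a + j) ^ 2)]
    _ ≤ (∑' j : ℕ, 1 / (a + j) ^ 2) / c ^ 2 := by
        gcongr
        exact (summable_one_div_add_natCast_sq ha).sum_le_tsum _ fun _ _ => by positivity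

lemma Real.rpow_neg_eq_two_mul_rpow_neg_mul {x : ℝ} (hx : 0 ≤ x) (τ : ℝ) :
    x ^ (-τ) = (2 * x) ^ (-τ) * 2 ^ τ := by
  rw [Real.mul_rpow zero_le_two hx, Real.rpow_neg zero_le_two]
  field_simp

lemma Real.two_mul_rpow_neg_sq {x : ℝ} (hx : 0 ≤ x) (τ : ℝ) :
    ((2 * x) ^ (-τ)) ^ 2 = (2 ^ (2 * τ) * x ^ (2 * τ))⁻¹ := by
  rw [← Real.rpow_natCast, ← Real.rpow_mul (by positivity), Real.mul_rpow zero_le_two hx,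
    show -τ * (2 : ℕ) = -(2 * τ) by push_cast; ring, Real.rpow_neg zero_le_two,
    Real.rpow_neg hx, mul_inv]

lemma sum_one_div_sq_le_of_natCast_mul_add_le {J : ℕ} {d : Fin J → ℝ} {γ τ x : ℝ}
    (hγ : 0 < γ) (hx : 0 < x)
    (hd : ∀ j : Fin J, (j : ℝ) * (γ * (2 * x) ^ (-τ)) + γ * x ^ (-τ) ≤ d j) :
    ∑ j, 1 / d j ^ 2 ≤
      2 ^ (2 * τ) * (∑' j : ℕ, 1 / ((2 : ℝ) ^ τ + j) ^ 2) * x ^ (2 * τ) / γ ^ 2 := by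
  have hsum := sum_one_div_sq_le_tsum_div (d := d) (a := 2 ^ τ) (c := γ * (2 * x) ^ (-τ))
    (by positivity) (by positivity) fun j => by
      have := hd j
      rw [Real.rpow_neg_eq_two_mul_rpow_neg_mul hx.le] at this
      linarith
  rw [mul_pow, Real.two_mul_rpow_neg_sq hx.le] at hsum
  calc _ ≤ _ := hsum
    _ = _ := by field_simp

theorem ordered_small_divisor_bound_general
    (n : ℕ) (ω : Fin n → ℝ) (γ τ : ℝ) (hγ : 0 < γ) (hτ : (n : ℝ) ≤ τ)
    (hdio : ∀ k : Fin n → ℤ, k ≠ 0 → ∀ m : ℤ,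
      γ * (∑ i, |(k i : ℝ)|) ^ (-τ) ≤ |(∑ i, (k i : ℝ) * ω i) - (m : ℝ)|)
    (mk : (Fin n → ℤ) → ℤ)
    (ℓ : ℕ) (J : ℕ) (κ : Fin J → (Fin n → ℤ))
    (hD : ∀ j : Fin J, κ j ≠ 0 ∧ (∑ i, |κ j i|) ≤ (ℓ : ℤ) ∧
      0 < (∑ i, (κ j i : ℝ) * ω i) - (mk (κ j) : ℝ))
    (hmono : StrictMono fun j : Fin J => (∑ i, (κ j i : ℝ) * ω i) - (mk (κ j) : ℝ)) :
    (∀ j : Fin J,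
      ((j : ℕ) : ℝ) * γ * ((2 * ℓ : ℕ) : ℝ) ^ (-τ) + γ * ((ℓ : ℕ) : ℝ) ^ (-τ) ≤
        (∑ i, (κ j i : ℝ) * ω i) - (mk (κ j) : ℝ)) ∧
    (∑ j : Fin J, 1 / ((∑ i, (κ j i : ℝ) * ω i) - (mk (κ j) : ℝ)) ^ 2) ≤
      (2 : ℝ) ^ (2 * τ) * (∑' jj : ℕ, 1 / ((2 : ℝ) ^ τ + (jj : ℝ)) ^ 2) *
        ((ℓ : ℕ) : ℝ) ^ (2 * τ) / γ ^ 2 := by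
  set d : Fin J → ℝ := fun j => (∑ i, (κ j i : ℝ) * ω i) - (mk (κ j) : ℝ)
  have hτ₀ : 0 ≤ τ := (Nat.cast_nonneg n).trans hτ
  have hκ : ∀ j, ∑ i, |(κ j i : ℝ)| ≤ ℓ := fun j => by
    exact_mod_cast (hD j).2.1
  have hbase : ∀ j, γ * (ℓ : ℝ) ^ (-τ) ≤ d j := fun j => by
    simpa [abs_of_pos (hD j).2.2] using
      IsDiophantine.mul_rpow_neg_le_abs hdio hγ.le hτ₀ (hD j).1 (hκ j) (mk (κ j))
  have hgap : ∀ i j, i < j → γ * (2 * ℓ : ℝ) ^ (-τ) ≤ d j - d i := fun i j hij =>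
    IsDiophantine.mul_rpow_neg_le_sub hdio hγ.le hτ₀
      (fun h => (hmono hij).ne (by simp only [d, h])) (hκ i) (hκ j) (hmono hij)
  have hlower := Fin.natCast_mul_add_le_of_forall_lt hbase hgap
  refine ⟨fun j => by simpa [mul_assoc] using hlower j, ?_⟩
  rcases J.eq_zero_or_pos with rfl | hJ
  · simp only [univ_eq_empty, sum_empty]
    positivity
  have hℓ : (0 : ℝ) < ℓ :=
    one_pos.trans_le ((one_le_sum_abs_intCast (hD ⟨0, hJ⟩).1).trans (hκ _))
  exact sum_one_div_sq_le_of_natCast_mul_add_le hγ hℓ hlower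

/-- Ordered small divisor bound: if `κ` enumerates (injectively, in strictly increasing
order of the divisors) elements of `D_ℓ = {k ≠ 0 : |k|₁ ≤ ℓ, d_k > 0}`, where
`d_k = k·ω − m_k` with `m_k` a nearest integer to `k·ω`, then the `j`-th divisor satisfies
`d_{κ j} ≥ (j−1)γ(2ℓ)^{−τ} + γℓ^{−τ}` and
`∑_j d_{κ j}^{−2} ≤ 2^{2τ} ζ(2,2^τ) ℓ^{2τ}/γ²`. -/
theorem ordered_small_divisor_bound
    (n : ℕ) (hn : 0 < n) (ω : Fin n → ℝ) (γ τ : ℝ) (hγ : 0 < γ) (hτ : (n : ℝ) ≤ τ)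
    (hdio : ∀ k : Fin n → ℤ, k ≠ 0 → ∀ m : ℤ,
      γ * (∑ i, |(k i : ℝ)|) ^ (-τ) ≤ |(∑ i, (k i : ℝ) * ω i) - (m : ℝ)|)
    (mk : (Fin n → ℤ) → ℤ)
    (hmk : ∀ (k : Fin n → ℤ) (m' : ℤ),
      |(∑ i, (k i : ℝ) * ω i) - (mk k : ℝ)| ≤ |(∑ i, (k i : ℝ) * ω i) - (m' : ℝ)|)
    (ℓ : ℕ) (hℓ : 0 < ℓ) (J : ℕ) (κ : Fin J → (Fin n → ℤ))
    (hD : ∀ j : Fin J, κ j ≠ 0 ∧ (∑ i, |κ j i|) ≤ (ℓ : ℤ) ∧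
      0 < (∑ i, (κ j i : ℝ) * ω i) - (mk (κ j) : ℝ))
    (hmono : StrictMono fun j : Fin J => (∑ i, (κ j i : ℝ) * ω i) - (mk (κ j) : ℝ)) :
    (∀ j : Fin J,
      ((j : ℕ) : ℝ) * γ * ((2 * ℓ : ℕ) : ℝ) ^ (-τ) + γ * ((ℓ : ℕ) : ℝ) ^ (-τ) ≤
        (∑ i, (κ j i : ℝ) * ω i) - (mk (κ j) : ℝ)) ∧
    (∑ j : Fin J, 1 / ((∑ i, (κ j i : ℝ) * ω i) - (mk (κ j) : ℝ)) ^ 2) ≤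
      (2 : ℝ) ^ (2 * τ) * (∑' jj : ℕ, 1 / ((2 : ℝ) ^ τ + (jj : ℝ)) ^ 2) *
        ((ℓ : ℕ) : ℝ) ^ (2 * τ) / γ ^ 2 :=
  ordered_small_divisor_bound_general n ω γ τ hγ hτ hdio mk ℓ J κ hD hmono
end

section
/- Triangular cohomological system: Let ω ∈ ℝⁿ be such that R_ω is ergodic on 𝕋ⁿ, let T : 𝕋ⁿ → ℝ^{n×n} be continuous with det⟨T⟩ ≠ 0, and let η = (η^L, η^N) : 𝕋ⁿ → ℝⁿ × ℝⁿ be such that the one-bite equations below admit solutions. Then the system ξ^L(θ) + T(θ)ξ^N(θ) − ξ^L(θ+ω) = η^L(θ) and ξ^N(θ) − ξ^N(θ+ω) = η^N(θ) − ⟨η^N⟩ has a solution given by ξ^N = R(η^N) + ξ^N₀ and ξ^L = R(η^L − T ξ^N) + ξ^L₀, where ξ^N₀ = ⟨T⟩^{-1}⟨η^L − T·R(η^N)⟩ and ξ^L₀ ∈ ℝⁿ arbitrary; the choice of ξ^N₀ makes ⟨η^L − T ξ^N⟩ = 0. -/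
/-!
Since `ξᴺ = R(ηᴺ) + ξᴺ₀` differs from `R(ηᴺ)` by a constant, it solves the same one-bite
equation. The average of `ηᴸ − Tξᴺ` is `⟨ηᴸ − T·R(ηᴺ)⟩ − ⟨T⟩ξᴺ₀`, which vanishes by the
choice of `ξᴺ₀`; hence the one-bite equation for `ξᴸ = R(ηᴸ − Tξᴺ) + ξᴸ₀` has no average
to subtract, and it is exactly the first equation of the system.
-/

open Matrix MeasureTheory

section AverageMatrix

variable {α : Type*} [MeasurableSpace α] {μ : Measure α} {m n : Type*} [Fintype m] [Fintype n]

theorem integrable_mulVec_const {T : α → Matrix m n ℝ}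
    (hT : ∀ p q, Integrable (fun θ => T θ p q) μ) (v : n → ℝ) :
    Integrable (fun θ => T θ *ᵥ v) μ :=
  Integrable.of_eval fun p => integrable_finsetSum _ fun q _ => (hT p q).mul_const (v q)

theorem integral_mulVec_const {T : α → Matrix m n ℝ}
    (hT : ∀ p q, Integrable (fun θ => T θ p q) μ) (v : n → ℝ) :
    ∫ θ, T θ *ᵥ v ∂μ = (of fun p q => ∫ θ, T θ p q ∂μ) *ᵥ v := by
  funext p
  rw [eval_integral (integrable_mulVec_const hT v).eval]
  simp only [mulVec, dotProduct, of_apply]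
  rw [integral_finsetSum _ fun q _ => (hT p q).mul_const (v q)]
  simp only [integral_mul_const]

theorem integral_sub_mulVec_inv_mulVec_integral [DecidableEq n] {T : α → Matrix n n ℝ}
    {f : α → n → ℝ} (hT : ∀ p q, Integrable (fun θ => T θ p q) μ) (hf : Integrable f μ)
    {A : Matrix n n ℝ} (hA : ∀ p q, A p q = ∫ θ, T θ p q ∂μ) (hAdet : IsUnit A) :
    ∫ θ, (f θ - T θ *ᵥ (A⁻¹ *ᵥ ∫ θ, f θ ∂μ)) ∂μ = 0 := by
  have hA' : (of fun p q => ∫ θ, T θ p q ∂μ) = A := by ext p q; exact (hA p q).symm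
  rw [integral_sub hf (integrable_mulVec_const hT _), integral_mulVec_const hT, hA',
    mulVec_mulVec, mul_nonsing_inv A ((isUnit_iff_isUnit_det A).mp hAdet), one_mulVec, sub_self]

end AverageMatrix

theorem triangular_cohomological_system_general
    (n : ℕ) (ω : Fin n → ℝ)
    (T : (Fin n → ℝ) → Matrix (Fin n) (Fin n) ℝ)
    (hT : ∀ p q, Continuous fun θ => T θ p q)
    (ηL ηN : (Fin n → ℝ) → (Fin n → ℝ))
    (hηL : Continuous ηL)
    (Tavg : Matrix (Fin n) (Fin n) ℝ)
    (hTavg : ∀ p q, Tavg p q = ∫ θ in Set.Icc (0 : Fin n → ℝ) 1, T θ p q)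
    (hdet : IsUnit Tavg)
    -- `u₁ = R(ηᴺ)`: the zero-average solution of the one-bite equation for `ηᴺ`
    (u₁ : (Fin n → ℝ) → (Fin n → ℝ)) (hu₁ : Continuous u₁)
    (hu₁sol : ∀ θ, u₁ θ - u₁ (θ + ω) = ηN θ - ∫ θ' in Set.Icc (0 : Fin n → ℝ) 1, ηN θ')
    (ξN0 : Fin n → ℝ)
    (hξN0 : ξN0 = Tavg⁻¹ *ᵥ ∫ θ in Set.Icc (0 : Fin n → ℝ) 1, (ηL θ - T θ *ᵥ u₁ θ))
    (ξN : (Fin n → ℝ) → (Fin n → ℝ)) (hξN : ∀ θ, ξN θ = u₁ θ + ξN0)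
    -- `u₂ = R(ηᴸ − Tξᴺ)`: the zero-average solution of the one-bite equation
    (u₂ : (Fin n → ℝ) → (Fin n → ℝ))
    (hu₂sol : ∀ θ, u₂ θ - u₂ (θ + ω) =
      (ηL θ - T θ *ᵥ ξN θ) - ∫ θ' in Set.Icc (0 : Fin n → ℝ) 1, (ηL θ' - T θ' *ᵥ ξN θ'))
    (ξL0 : Fin n → ℝ) (ξL : (Fin n → ℝ) → (Fin n → ℝ)) (hξL : ∀ θ, ξL θ = u₂ θ + ξL0) :
    (∀ θ, ξL θ + T θ *ᵥ ξN θ - ξL (θ + ω) = ηL θ) ∧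
    (∀ θ, ξN θ - ξN (θ + ω) = ηN θ - ∫ θ' in Set.Icc (0 : Fin n → ℝ) 1, ηN θ') ∧
    (∫ θ in Set.Icc (0 : Fin n → ℝ) 1, (ηL θ - T θ *ᵥ ξN θ)) = 0 := by
  have hTcont : Continuous T := continuous_matrix hT
  have havg : ∫ θ in Set.Icc (0 : Fin n → ℝ) 1, (ηL θ - T θ *ᵥ ξN θ) = 0 := by
    have hsplit : (fun θ => ηL θ - T θ *ᵥ ξN θ) =
        fun θ => (ηL θ - T θ *ᵥ u₁ θ) - T θ *ᵥ ξN0 := by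
      funext θ
      rw [hξN, mulVec_add, sub_add_eq_sub_sub]
    rw [hsplit, hξN0]
    exact integral_sub_mulVec_inv_mulVec_integral (fun p q => (hT p q).integrableOn_Icc)
      (hηL.sub (hTcont.matrix_mulVec hu₁)).integrableOn_Icc hTavg hdet
  refine ⟨fun θ => ?_, fun θ => ?_, havg⟩
  · have hu₂θ := hu₂sol θ
    rw [havg, sub_zero] at hu₂θ
    calc ξL θ + T θ *ᵥ ξN θ - ξL (θ + ω) = (u₂ θ - u₂ (θ + ω)) + T θ *ᵥ ξN θ := by
          rw [hξL, hξL]; abel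
      _ = ηL θ := by rw [hu₂θ, sub_add_cancel]
  · rw [hξN, hξN, add_sub_add_right_eq_sub, hu₁sol]

/-- Solution of the triangular cohomological system: with `ξᴺ = R(ηᴺ) + ξᴺ₀`,
`ξᴺ₀ = ⟨T⟩⁻¹⟨ηᴸ − T·R(ηᴺ)⟩`, and `ξᴸ = R(ηᴸ − Tξᴺ) + ξᴸ₀`, the system
`ξᴸ(θ) + T(θ)ξᴺ(θ) − ξᴸ(θ+ω) = ηᴸ(θ)`, `ξᴺ(θ) − ξᴺ(θ+ω) = ηᴺ(θ) − ⟨ηᴺ⟩` is solved,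
and the choice of `ξᴺ₀` makes `⟨ηᴸ − Tξᴺ⟩ = 0`. -/
theorem triangular_cohomological_system
    (n : ℕ) (hn : 0 < n) (ω : Fin n → ℝ)
    (T : (Fin n → ℝ) → Matrix (Fin n) (Fin n) ℝ)
    (hT : ∀ p q, Continuous fun θ => T θ p q)
    (ηL ηN : (Fin n → ℝ) → (Fin n → ℝ))
    (hηL : Continuous ηL) (hηN : Continuous ηN)
    (Tavg : Matrix (Fin n) (Fin n) ℝ)
    (hTavg : ∀ p q, Tavg p q = ∫ θ in Set.Icc (0 : Fin n → ℝ) 1, T θ p q)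
    (hdet : IsUnit Tavg)
    -- `u₁ = R(ηᴺ)`: the zero-average solution of the one-bite equation for `ηᴺ`
    (u₁ : (Fin n → ℝ) → (Fin n → ℝ)) (hu₁ : Continuous u₁)
    (hu₁avg : (∫ θ in Set.Icc (0 : Fin n → ℝ) 1, u₁ θ) = 0)
    (hu₁sol : ∀ θ, u₁ θ - u₁ (θ + ω) = ηN θ - ∫ θ' in Set.Icc (0 : Fin n → ℝ) 1, ηN θ')
    (ξN0 : Fin n → ℝ)
    (hξN0 : ξN0 = Tavg⁻¹ *ᵥ ∫ θ in Set.Icc (0 : Fin n → ℝ) 1, (ηL θ - T θ *ᵥ u₁ θ))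
    (ξN : (Fin n → ℝ) → (Fin n → ℝ)) (hξN : ∀ θ, ξN θ = u₁ θ + ξN0)
    -- `u₂ = R(ηᴸ − Tξᴺ)`: the zero-average solution of the one-bite equation
    (u₂ : (Fin n → ℝ) → (Fin n → ℝ)) (hu₂ : Continuous u₂)
    (hu₂avg : (∫ θ in Set.Icc (0 : Fin n → ℝ) 1, u₂ θ) = 0)
    (hu₂sol : ∀ θ, u₂ θ - u₂ (θ + ω) =
      (ηL θ - T θ *ᵥ ξN θ) - ∫ θ' in Set.Icc (0 : Fin n → ℝ) 1, (ηL θ' - T θ' *ᵥ ξN θ'))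
    (ξL0 : Fin n → ℝ) (ξL : (Fin n → ℝ) → (Fin n → ℝ)) (hξL : ∀ θ, ξL θ = u₂ θ + ξL0) :
    (∀ θ, ξL θ + T θ *ᵥ ξN θ - ξL (θ + ω) = ηL θ) ∧
    (∀ θ, ξN θ - ξN (θ + ω) = ηN θ - ∫ θ' in Set.Icc (0 : Fin n → ℝ) 1, ηN θ') ∧
    (∫ θ in Set.Icc (0 : Fin n → ℝ) 1, (ηL θ - T θ *ᵥ ξN θ)) = 0 :=
  triangular_cohomological_system_general n ω T hT ηL ηN hηL Tavg hTavg hdet u₁ hu₁ hu₁sol ξN0 hξN0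
    ξN hξN u₂ hu₂sol ξL0 ξL hξL
end

section
/- Exactness average identity: Let F : 𝓐 → 𝓐 be an exact symplectic map on the annulus 𝓐 ⊂ 𝕋ⁿ×ℝⁿ with action form a and primitive function S (i.e. DS(z) = a(F(z))ᵀ DF(z) − a(z)ᵀ), and let K : 𝕋ⁿ → 𝓐 be an embedding with invariance error E(θ) = F(K(θ)) − K(θ+ω). Then ⟨DK(θ+ω)ᵀ Ω(K(θ+ω)) E(θ)⟩ = ⟨DE(θ)ᵀ Δa(θ) + DK(θ+ω)ᵀ Δ²a(θ)⟩, where Δa(θ) = a(F(K(θ))) − a(K(θ+ω)) = ∫₀¹ Da(K(θ+ω)+tE(θ)) E(θ) dt and Δ²a(θ) = a(F(K(θ))) − a(K(θ+ω)) − Da(K(θ+ω))E(θ) = ∫₀¹ (1−t) D²a(K(θ+ω)+tE(θ)) E(θ)^{⊗2} dt. In particular, the average on the left is quadratically small in E. -/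
open scoped BigOperators
open Matrix MeasureTheory Set Pointwise

/-! Pointwise, the integrand `DK(θ+ω)ᵀ Ω(K(θ+ω)) E(θ)` equals `DE(θ)ᵀ Δa(θ) + DK(θ+ω)ᵀ Δ²a(θ)`
plus the gradient of the periodic function `a(K(θ+ω)) · E(θ) − S(K(θ))` plus the coboundary
`G(θ+ω) − G(θ)` of the pullback `G = DKᵀ (a ∘ K)` of the action form. Once exactness
`∇S = DFᵀ (a ∘ F) − a` and the chain rule `DE = DF(K) DK − DK(· + ω)` are inserted, this is
matrix algebra. Both extra terms have zero average over the unit cube: the gradient by the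
divergence theorem and periodicity, the coboundary by translation invariance of Lebesgue measure
on the torus. -/

noncomputable def jacM {ι κ : Type*} [Fintype ι] [DecidableEq ι] [Fintype κ]
    (f : (ι → ℝ) → (κ → ℝ)) (x : ι → ℝ) : Matrix κ ι ℝ :=
  Matrix.of fun i j => fderiv ℝ f x (Pi.single j 1) i

section Jacobian

variable {ι κ ν : Type*} [Fintype ι] [DecidableEq ι] [Fintype κ] [Fintype ν]

theorem jacM_eq_toMatrix' (f : (ι → ℝ) → κ → ℝ) (x : ι → ℝ) :
    jacM f x = LinearMap.toMatrix' (fderiv ℝ f x : (ι → ℝ) →ₗ[ℝ] κ → ℝ) :=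
  rfl

theorem jacM_mulVec (f : (ι → ℝ) → κ → ℝ) (x w : ι → ℝ) : jacM f x *ᵥ w = fderiv ℝ f x w := by
  rw [jacM_eq_toMatrix', LinearMap.toMatrix'_mulVec]
  rfl

theorem jacM_comp [DecidableEq κ] {f : (κ → ℝ) → ν → ℝ} {g : (ι → ℝ) → κ → ℝ} {x : ι → ℝ}
    (hf : DifferentiableAt ℝ f (g x)) (hg : DifferentiableAt ℝ g x) :
    jacM (fun y => f (g y)) x = jacM f (g x) * jacM g x := by
  change LinearMap.toMatrix' (fderiv ℝ (f ∘ g) x : (ι → ℝ) →ₗ[ℝ] ν → ℝ) = _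
  rw [fderiv_comp x hf hg, ContinuousLinearMap.toLinearMap_comp,
    LinearMap.toMatrix'_comp]
  rfl

theorem jacM_sub {f g : (ι → ℝ) → κ → ℝ} {x : ι → ℝ}
    (hf : DifferentiableAt ℝ f x) (hg : DifferentiableAt ℝ g x) :
    jacM (fun y => f y - g y) x = jacM f x - jacM g x := by
  simp only [jacM_eq_toMatrix', fderiv_fun_sub hf hg, ContinuousLinearMap.toLinearMap_sub, map_sub]

theorem jacM_comp_add_right (f : (ι → ℝ) → κ → ℝ) (c x : ι → ℝ) :
    jacM (fun y => f (y + c)) x = jacM f (x + c) := by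
  simp only [jacM_eq_toMatrix', fderiv_comp_add_right]

theorem jacM_add_of_forall_add_eq {f : (ι → ℝ) → κ → ℝ} {c : ι → ℝ} {d : κ → ℝ}
    (h : ∀ y, f (y + c) = f y + d) (x : ι → ℝ) : jacM f (x + c) = jacM f x := by
  rw [← jacM_comp_add_right, funext h]
  simp only [jacM_eq_toMatrix', fderiv_add_const]

theorem ContDiff.continuous_jacM {f : (ι → ℝ) → κ → ℝ} (hf : ContDiff ℝ 1 f) :
    Continuous (jacM f) :=
  continuous_matrix fun i _ =>
    (continuous_apply i).comp ((hf.continuous_fderiv one_ne_zero).clm_apply continuous_const)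

end Jacobian

section Gradient

variable {ι κ : Type*} [Fintype ι] [DecidableEq ι] [Fintype κ]

-- Mathlib's `gradient` needs an inner product space, and `ι → ℝ` carries the sup norm.
noncomputable def gradVec (φ : (ι → ℝ) → ℝ) (x : ι → ℝ) : ι → ℝ :=
  fun j => fderiv ℝ φ x (Pi.single j 1)

theorem gradVec_eq_of_forall_fderiv_apply {φ : (ι → ℝ) → ℝ} {x v : ι → ℝ}
    (h : ∀ w, fderiv ℝ φ x w = v ⬝ᵥ w) : gradVec φ x = v :=
  funext fun j => by rw [gradVec, h, dotProduct_single, mul_one]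

theorem gradVec_dotProduct (φ : (ι → ℝ) → ℝ) (x w : ι → ℝ) :
    gradVec φ x ⬝ᵥ w = fderiv ℝ φ x w := by
  conv_rhs => rw [pi_eq_sum_univ' w]
  simp [gradVec, dotProduct, mul_comm]

theorem gradVec_sub {φ ψ : (ι → ℝ) → ℝ} {x : ι → ℝ}
    (hφ : DifferentiableAt ℝ φ x) (hψ : DifferentiableAt ℝ ψ x) :
    gradVec (fun y => φ y - ψ y) x = gradVec φ x - gradVec ψ x := by
  funext j
  simp [gradVec, fderiv_fun_sub hφ hψ]

theorem gradVec_comp [DecidableEq κ] {φ : (κ → ℝ) → ℝ} {g : (ι → ℝ) → κ → ℝ} {x : ι → ℝ}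
    (hφ : DifferentiableAt ℝ φ (g x)) (hg : DifferentiableAt ℝ g x) :
    gradVec (fun y => φ (g y)) x = (jacM g x)ᵀ *ᵥ gradVec φ (g x) :=
  gradVec_eq_of_forall_fderiv_apply fun w => by
    rw [dotProduct_comm, dotProduct_transpose_mulVec, gradVec_dotProduct, jacM_mulVec]
    change fderiv ℝ (φ ∘ g) x w = _
    rw [fderiv_comp x hφ hg]
    rfl

omit [DecidableEq ι] in
theorem fderiv_dotProduct_apply {u v : (ι → ℝ) → κ → ℝ} {x : ι → ℝ}
    (hu : DifferentiableAt ℝ u x) (hv : DifferentiableAt ℝ v x) (w : ι → ℝ) :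
    fderiv ℝ (fun y => u y ⬝ᵥ v y) x w = fderiv ℝ u x w ⬝ᵥ v x + u x ⬝ᵥ fderiv ℝ v x w := by
  have h : HasFDerivAt (fun y => ∑ i, u y i * v y i) _ x := HasFDerivAt.fun_sum fun i _ =>
    (hasFDerivAt_pi'.mp hu.hasFDerivAt i).mul (hasFDerivAt_pi'.mp hv.hasFDerivAt i)
  rw [show (fun y => u y ⬝ᵥ v y) = fun y => ∑ i, u y i * v y i from rfl, h.fderiv]
  simp [dotProduct, Finset.sum_add_distrib, mul_comm, add_comm]

theorem gradVec_dotProduct_fun {u v : (ι → ℝ) → κ → ℝ} {x : ι → ℝ}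
    (hu : DifferentiableAt ℝ u x) (hv : DifferentiableAt ℝ v x) :
    gradVec (fun y => u y ⬝ᵥ v y) x = (jacM u x)ᵀ *ᵥ v x + (jacM v x)ᵀ *ᵥ u x :=
  gradVec_eq_of_forall_fderiv_apply fun w => by
    rw [fderiv_dotProduct_apply hu hv, add_dotProduct, dotProduct_comm _ w,
      dotProduct_transpose_mulVec, dotProduct_comm _ w, dotProduct_transpose_mulVec, jacM_mulVec,
      jacM_mulVec, dotProduct_comm (v x)]

theorem ContDiff.continuous_gradVec {φ : (ι → ℝ) → ℝ} (hφ : ContDiff ℝ 1 φ) :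
    Continuous (gradVec φ) :=
  continuous_pi fun _ => (hφ.continuous_fderiv one_ne_zero).clm_apply continuous_const

end Gradient

theorem ContDiff.dotProduct {E κ : Type*} [NormedAddCommGroup E] [NormedSpace ℝ E] [Fintype κ]
    {u v : E → κ → ℝ} {k : WithTop ℕ∞} (hu : ContDiff ℝ k u) (hv : ContDiff ℝ k v) :
    ContDiff ℝ k fun x => u x ⬝ᵥ v x :=
  ContDiff.sum fun i _ => (contDiff_pi.mp hu i).mul (contDiff_pi.mp hv i)

theorem DifferentiableAt.dotProduct {E κ : Type*} [NormedAddCommGroup E] [NormedSpace ℝ E]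
    [Fintype κ] {u v : E → κ → ℝ} {x : E} (hu : DifferentiableAt ℝ u x)
    (hv : DifferentiableAt ℝ v x) : DifferentiableAt ℝ (fun x => u x ⬝ᵥ v x) x :=
  DifferentiableAt.fun_sum fun i _ => (differentiableAt_pi.mp hu i).mul (differentiableAt_pi.mp hv i)

def IntPeriodic {ι X : Type*} (φ : (ι → ℝ) → X) : Prop :=
  ∀ θ (e : ι → ℤ), φ (θ + fun i => (e i : ℝ)) = φ θ

section Average

variable {ι E : Type*} [Fintype ι] [NormedAddCommGroup E] [NormedSpace ℝ E]

theorem ae_eq_fundamentalDomain_pi_basisFun :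
    ZSpan.fundamentalDomain (Pi.basisFun ℝ ι) =ᵐ[volume] Icc (0 : ι → ℝ) 1 := by
  rw [ZSpan.fundamentalDomain_pi_basisFun, volume_pi]
  exact Measure.univ_pi_Ico_ae_eq_Icc

theorem integral_Icc_comp_add_right_of_periodic {ψ : (ι → ℝ) → E}
    (hψ : IntPeriodic ψ) (ω : ι → ℝ) :
    ∫ θ in Icc (0 : ι → ℝ) 1, ψ (θ + ω) = ∫ θ in Icc (0 : ι → ℝ) 1, ψ θ := by
  set b := Pi.basisFun ℝ ι
  set L := (Submodule.span ℤ (range b)).toAddSubgroup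
  have hD : IsAddFundamentalDomain L (ZSpan.fundamentalDomain b) volume :=
    ZSpan.isAddFundamentalDomain' b volume
  have hinv : ∀ (g : L) (x : ι → ℝ), ψ ((g +ᵥ x) + ω) = ψ (x + ω) := by
    rintro ⟨g, hg⟩ x
    choose e he using (b.mem_span_iff_repr_mem ℤ g).mp hg
    obtain rfl : (fun i => (e i : ℝ)) = g := funext he
    change ψ ((fun i => (e i : ℝ)) + x + ω) = _
    rw [add_comm _ x, add_right_comm, hψ]
  have : Countable L := inferInstanceAs (Countable (Submodule.span ℤ (range b)))
  calc ∫ θ in Icc (0 : ι → ℝ) 1, ψ (θ + ω)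
      = ∫ θ in ZSpan.fundamentalDomain b, ψ (θ + ω) :=
        setIntegral_congr_set ae_eq_fundamentalDomain_pi_basisFun.symm
    _ = ∫ θ in (· + ω) ⁻¹' ZSpan.fundamentalDomain b, ψ (θ + ω) := by
        have : (· + ω) ⁻¹' ZSpan.fundamentalDomain b = (-ω) +ᵥ ZSpan.fundamentalDomain b := by
          ext x
          simp [mem_vadd_set_iff_neg_vadd_mem, add_comm]
        rw [this]
        exact hD.setIntegral_eq (hD.vadd_of_comm (-ω)) hinv
    _ = ∫ θ in ZSpan.fundamentalDomain b, ψ θ :=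
        (measurePreserving_add_right volume ω).setIntegral_preimage_emb
          (measurableEmbedding_addRight ω) ψ _
    _ = ∫ θ in Icc (0 : ι → ℝ) 1, ψ θ := setIntegral_congr_set ae_eq_fundamentalDomain_pi_basisFun

theorem Fin.insertNth_one_eq_insertNth_zero_add_single {m : ℕ} (i : Fin (m + 1)) (x : Fin m → ℝ) :
    (i.insertNth (1 : ℝ) x : Fin (m + 1) → ℝ) = i.insertNth 0 x + Pi.single i 1 := by
  rw [← sub_eq_iff_eq_add', Fin.insertNth_sub_same, sub_zero]

-- Divergence theorem for the field `φ • eⱼ`: the only boundary term left is the difference of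
-- `φ` on two opposite faces of the cube, which vanishes by periodicity.
theorem integral_Icc_fderiv_single_eq_zero {n : ℕ} {φ : (Fin n → ℝ) → ℝ} (hφ : ContDiff ℝ 1 φ)
    (j : Fin n) (hφj : ∀ θ, φ (θ + Pi.single j 1) = φ θ) :
    ∫ θ in Icc (0 : Fin n → ℝ) 1, fderiv ℝ φ θ (Pi.single j 1) = 0 := by
  obtain ⟨m, rfl⟩ := Nat.exists_eq_add_one_of_ne_zero j.pos.ne'
  set φ' : Fin (m + 1) → (Fin (m + 1) → ℝ) → (Fin (m + 1) → ℝ) →L[ℝ] ℝ :=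
    Pi.single j (fderiv ℝ φ)
  have hsum : ∀ x, ∑ i, φ' i x (Pi.single i 1) =
      fderiv ℝ φ x (Pi.single j 1) := fun x => by
    rw [Finset.sum_eq_single j (fun i _ hi => by simp [φ', hi]) (by simp)]
    simp [φ']
  have hdiv := integral_divergence_of_hasFDerivAt_off_countable' 0 1 zero_le_one
    (Pi.single j φ) φ' ∅ countable_empty
    (fun i => by
      rcases eq_or_ne i j with rfl | hi
      · simpa using hφ.continuous.continuousOn
      · rw [Pi.single_eq_of_ne hi]
        exact continuousOn_const)
    (fun x _ i => by
      rcases eq_or_ne i j with rfl | hi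
      · simpa [φ'] using (hφ.differentiable one_ne_zero x).hasFDerivAt
      · simp only [φ', Pi.single_eq_of_ne hi]
        exact hasFDerivAt_const 0 x)
    (by
      simp_rw [hsum]
      exact ((hφ.continuous_fderiv one_ne_zero).clm_apply continuous_const).integrableOn_Icc)
  simp_rw [hsum] at hdiv
  rw [hdiv]
  refine Finset.sum_eq_zero fun i _ => ?_
  rcases eq_or_ne i j with rfl | hi
  · simp only [Pi.single_eq_same]
    refine sub_eq_zero.mpr (integral_congr_ae (ae_of_all _ fun x => ?_))
    simp only [Pi.one_apply, Pi.zero_apply]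
    rw [Fin.insertNth_one_eq_insertNth_zero_add_single, hφj]
  · simp [hi]

theorem integral_Icc_gradVec_eq_zero {n : ℕ} {φ : (Fin n → ℝ) → ℝ} (hφ : ContDiff ℝ 1 φ)
    (hφper : IntPeriodic φ) :
    ∫ θ in Icc (0 : Fin n → ℝ) 1, gradVec φ θ = 0 := by
  funext j
  rw [eval_integral (f := gradVec φ) fun i =>
    ((continuous_apply i).comp hφ.continuous_gradVec).integrableOn_Icc, Pi.zero_apply]
  refine integral_Icc_fderiv_single_eq_zero hφ j fun θ => ?_
  have hsingle : (fun i => (((Pi.single j 1 : Fin n → ℤ) i : ℤ) : ℝ)) = Pi.single j 1 := by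
    funext i
    rcases eq_or_ne i j with rfl | h <;> simp [*]
  rw [← hsingle, hφper]

theorem integral_Icc_add_gradVec_add_sub_comp_add_right {n : ℕ} {f G : (Fin n → ℝ) → Fin n → ℝ}
    {φ : (Fin n → ℝ) → ℝ} (hf : Continuous f) (hφ : ContDiff ℝ 1 φ) (hφper : IntPeriodic φ)
    (hG : Continuous G) (hGper : IntPeriodic G) (ω : Fin n → ℝ) :
    ∫ θ in Icc (0 : Fin n → ℝ) 1, (f θ + gradVec φ θ + (G (θ + ω) - G θ))
      = ∫ θ in Icc (0 : Fin n → ℝ) 1, f θ := by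
  have hgrad := hφ.continuous_gradVec
  rw [integral_add, integral_add, integral_sub, integral_Icc_gradVec_eq_zero hφ hφper,
    integral_Icc_comp_add_right_of_periodic hGper, sub_self, add_zero, add_zero]
  all_goals exact Continuous.integrableOn_Icc (by fun_prop)

end Average

-- With `J = DK(θ)`, `Jω = DK(θ+ω)`, `A = Da(K(θ+ω))`, `B = DF(K(θ))`, the three groups on the
-- right are the right-hand integrand, `∇(a(K(·+ω)) · E − S ∘ K)(θ)` and `G(θ+ω) − G(θ)`.
theorem exactness_integrand_decomposition {ι κ R : Type*} [Fintype ι] [Fintype κ] [CommRing R]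
    (J Jω : Matrix κ ι R) (A B : Matrix κ κ R) (E aF aω aK : κ → R) :
    Jωᵀ *ᵥ ((Aᵀ - A) *ᵥ E)
      = ((B * J - Jω)ᵀ *ᵥ (aF - aω) + Jωᵀ *ᵥ (aF - aω - A *ᵥ E))
        + (((A * Jω)ᵀ *ᵥ E + (B * J - Jω)ᵀ *ᵥ aω) - Jᵀ *ᵥ (Bᵀ *ᵥ aF - aK))
        + (Jωᵀ *ᵥ aω - Jᵀ *ᵥ aK) := by
  simp only [mulVec_sub, sub_mulVec, transpose_sub, transpose_mul, ← mulVec_mulVec]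
  abel

section InvariantTorus

variable {ι κ : Type*} [Fintype ι] [DecidableEq ι] [Fintype κ] [DecidableEq κ]
  {F a : (κ → ℝ) → κ → ℝ} {S : (κ → ℝ) → ℝ} {K : (ι → ℝ) → κ → ℝ}

noncomputable def pullbackForm (a : (κ → ℝ) → κ → ℝ) (K : (ι → ℝ) → κ → ℝ) (θ : ι → ℝ) :
    ι → ℝ :=
  (jacM K θ)ᵀ *ᵥ a (K θ)

theorem jacM_comp_sub_comp_add_right (hF : Differentiable ℝ F) (hK : Differentiable ℝ K)
    (ω θ : ι → ℝ) :
    jacM (fun θ => F (K θ) - K (θ + ω)) θ = jacM F (K θ) * jacM K θ - jacM K (θ + ω) := by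
  have hKω : Differentiable ℝ fun θ => K (θ + ω) := hK.comp (differentiable_id.add_const ω)
  rw [jacM_sub ((hF _).fun_comp' θ (hK θ)) (hKω θ), jacM_comp (hF _) (hK θ), jacM_comp_add_right]

theorem gradVec_eq_of_fderiv_eq_sub
    (hexact : ∀ z w, fderiv ℝ S z w = a (F z) ⬝ᵥ fderiv ℝ F z w - a z ⬝ᵥ w) (z : κ → ℝ) :
    gradVec S z = (jacM F z)ᵀ *ᵥ a (F z) - a z :=
  gradVec_eq_of_forall_fderiv_apply fun w => by
    rw [sub_dotProduct, dotProduct_comm _ w, dotProduct_transpose_mulVec, jacM_mulVec, hexact]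

theorem exactness_integrand_eq (hF : Differentiable ℝ F) (ha : Differentiable ℝ a)
    (hS : Differentiable ℝ S) (hK : Differentiable ℝ K)
    (hexact : ∀ z w, fderiv ℝ S z w = a (F z) ⬝ᵥ fderiv ℝ F z w - a z ⬝ᵥ w) (ω θ : ι → ℝ) :
    (jacM K (θ + ω))ᵀ *ᵥ (((jacM a (K (θ + ω)))ᵀ - jacM a (K (θ + ω))) *ᵥ (F (K θ) - K (θ + ω)))
      = ((jacM (fun θ => F (K θ) - K (θ + ω)) θ)ᵀ *ᵥ (a (F (K θ)) - a (K (θ + ω)))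
          + (jacM K (θ + ω))ᵀ *ᵥ
            (a (F (K θ)) - a (K (θ + ω)) - jacM a (K (θ + ω)) *ᵥ (F (K θ) - K (θ + ω))))
        + gradVec (fun θ => a (K (θ + ω)) ⬝ᵥ (F (K θ) - K (θ + ω)) - S (K θ)) θ
        + (pullbackForm a K (θ + ω) - pullbackForm a K θ) := by
  have hKω : Differentiable ℝ fun θ => K (θ + ω) := hK.comp (differentiable_id.add_const ω)
  have hE : Differentiable ℝ fun θ => F (K θ) - K (θ + ω) := (hF.comp hK).sub hKω
  have haKω : Differentiable ℝ fun θ => a (K (θ + ω)) := ha.comp hKω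
  rw [gradVec_sub ((haKω θ).dotProduct (hE θ)) ((hS _).fun_comp' θ (hK θ)),
    gradVec_dotProduct_fun (haKω θ) (hE θ), jacM_comp (ha _) (hKω θ), jacM_comp_add_right,
    gradVec_comp (hS _) (hK θ), gradVec_eq_of_fderiv_eq_sub hexact,
    jacM_comp_sub_comp_add_right hF hK]
  exact exactness_integrand_decomposition _ _ _ _ _ _ _ _

end InvariantTorus

section Periodicity

variable {ι κ : Type*} {F a : (κ → ℝ) → κ → ℝ} {S : (κ → ℝ) → ℝ} {K : (ι → ℝ) → κ → ℝ}
  {ℓ : (ι → ℤ) → κ → ℝ}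

theorem intPeriodic_pullbackForm [Fintype ι] [DecidableEq ι] [Fintype κ]
    (haper : ∀ z e, a (z + ℓ e) = a z)
    (hKper : ∀ θ (e : ι → ℤ), K (θ + fun i => (e i : ℝ)) = K θ + ℓ e) :
    IntPeriodic (pullbackForm a K) := fun θ e => by
  rw [pullbackForm, pullbackForm, jacM_add_of_forall_add_eq (fun y => hKper y e), hKper, haper]

theorem intPeriodic_comp_sub_comp_add_right (hFper : ∀ z e, F (z + ℓ e) = F z + ℓ e)
    (hKper : ∀ θ (e : ι → ℤ), K (θ + fun i => (e i : ℝ)) = K θ + ℓ e) (ω : ι → ℝ) :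
    IntPeriodic fun θ => F (K θ) - K (θ + ω) := fun θ e => by
  dsimp only
  rw [hKper, hFper, add_right_comm, hKper]
  abel

theorem intPeriodic_action_sub_primitive [Fintype κ] (hFper : ∀ z e, F (z + ℓ e) = F z + ℓ e)
    (haper : ∀ z e, a (z + ℓ e) = a z) (hSper : ∀ z e, S (z + ℓ e) = S z)
    (hKper : ∀ θ (e : ι → ℤ), K (θ + fun i => (e i : ℝ)) = K θ + ℓ e) (ω : ι → ℝ) :
    IntPeriodic fun θ => a (K (θ + ω)) ⬝ᵥ (F (K θ) - K (θ + ω)) - S (K θ) := fun θ e => by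
  have hE := intPeriodic_comp_sub_comp_add_right hFper hKper ω θ e
  dsimp only at hE ⊢
  rw [hE, add_right_comm, hKper, haper, hKper, hSper]

end Periodicity

theorem exactness_average_identity_general
    (n : ℕ)
    (F : ((Fin n ⊕ Fin n) → ℝ) → ((Fin n ⊕ Fin n) → ℝ))
    (a : ((Fin n ⊕ Fin n) → ℝ) → ((Fin n ⊕ Fin n) → ℝ))
    (S : ((Fin n ⊕ Fin n) → ℝ) → ℝ)
    (hF : ContDiff ℝ 2 F) (ha : ContDiff ℝ 2 a) (hS : ContDiff ℝ 1 S)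
    (hFper : ∀ (z : (Fin n ⊕ Fin n) → ℝ) (e : Fin n → ℤ),
      F (z + Sum.elim (fun i => (e i : ℝ)) fun _ => 0) =
        F z + Sum.elim (fun i => (e i : ℝ)) fun _ => 0)
    (haper : ∀ (z : (Fin n ⊕ Fin n) → ℝ) (e : Fin n → ℤ),
      a (z + Sum.elim (fun i => (e i : ℝ)) fun _ => 0) = a z)
    (hSper : ∀ (z : (Fin n ⊕ Fin n) → ℝ) (e : Fin n → ℤ),
      S (z + Sum.elim (fun i => (e i : ℝ)) fun _ => 0) = S z)
    -- `S` is a primitive function of `F`: `DS(z) = a(F(z))ᵀ DF(z) − a(z)ᵀ`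
    (hexact : ∀ (z : (Fin n ⊕ Fin n) → ℝ) (w : (Fin n ⊕ Fin n) → ℝ),
      fderiv ℝ S z w = (∑ i, a (F z) i * fderiv ℝ F z w i) - ∑ i, a z i * w i)
    (K : (Fin n → ℝ) → ((Fin n ⊕ Fin n) → ℝ)) (hK : ContDiff ℝ 2 K)
    (hKper : ∀ (θ : Fin n → ℝ) (e : Fin n → ℤ),
      K (θ + fun i => (e i : ℝ)) = K θ + Sum.elim (fun i => (e i : ℝ)) fun _ => 0)
    (ω : Fin n → ℝ)
    (E : (Fin n → ℝ) → ((Fin n ⊕ Fin n) → ℝ)) (hE : ∀ θ, E θ = F (K θ) - K (θ + ω))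
    (Δa Δ2a : (Fin n → ℝ) → ((Fin n ⊕ Fin n) → ℝ))
    (hΔa : ∀ θ, Δa θ = a (F (K θ)) - a (K (θ + ω)))
    (hΔ2a : ∀ θ, Δ2a θ = Δa θ - jacM a (K (θ + ω)) *ᵥ E θ) :
    (∫ θ in Set.Icc (0 : Fin n → ℝ) 1,
        (jacM K (θ + ω))ᵀ *ᵥ (((jacM a (K (θ + ω)))ᵀ - jacM a (K (θ + ω))) *ᵥ E θ))
      = ∫ θ in Set.Icc (0 : Fin n → ℝ) 1,
          ((jacM E θ)ᵀ *ᵥ Δa θ + (jacM K (θ + ω))ᵀ *ᵥ Δ2a θ) := by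
  obtain rfl : E = fun θ => F (K θ) - K (θ + ω) := funext hE
  obtain rfl : Δ2a = fun θ => Δa θ - jacM a (K (θ + ω)) *ᵥ (F (K θ) - K (θ + ω)) := funext hΔ2a
  obtain rfl : Δa = fun θ => a (F (K θ)) - a (K (θ + ω)) := funext hΔa
  have hKω : ContDiff ℝ 2 fun θ => K (θ + ω) := hK.comp (contDiff_id.add contDiff_const)
  have hEC : ContDiff ℝ 1 fun θ => F (K θ) - K (θ + ω) := ((hF.comp hK).sub hKω).of_le one_le_two
  have hP : ContDiff ℝ 1 fun θ => a (K (θ + ω)) ⬝ᵥ (F (K θ) - K (θ + ω)) - S (K θ) :=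
    (((ha.comp hKω).of_le one_le_two).dotProduct hEC).sub (hS.comp (hK.of_le one_le_two))
  have hca := ha.continuous
  have hcF := hF.continuous
  have hcK := hK.continuous
  have hcjacK := (hK.of_le one_le_two).continuous_jacM
  have hcjacE := hEC.continuous_jacM
  have hcjaca := (ha.of_le one_le_two).continuous_jacM
  rw [setIntegral_congr_fun measurableSet_Icc fun θ _ =>
    exactness_integrand_eq (hF.differentiable two_ne_zero) (ha.differentiable two_ne_zero)
      (hS.differentiable one_ne_zero) (hK.differentiable two_ne_zero) hexact ω θ]
  exact integral_Icc_add_gradVec_add_sub_comp_add_right (by fun_prop) hP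
    (intPeriodic_action_sub_primitive hFper haper hSper hKper ω)
    (by unfold pullbackForm; fun_prop) (intPeriodic_pullbackForm haper hKper) ω

/-- Exactness average identity: for an exact symplectic map `F` with action form `a` and
primitive function `S`, and an approximately invariant torus `K` with error
`E(θ) = F(K(θ)) − K(θ+ω)`, the average
`⟨DK(θ+ω)ᵀ Ω(K(θ+ω)) E(θ)⟩` equals `⟨DE(θ)ᵀ Δa(θ) + DK(θ+ω)ᵀ Δ2a(θ)⟩`, where
`Ω = Daᵀ − Da`, `Δa(θ) = a(F(K(θ))) − a(K(θ+ω))` and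
`Δ2a(θ) = Δa(θ) − Da(K(θ+ω)) E(θ)`. -/
theorem exactness_average_identity
    (n : ℕ) (hn : 0 < n)
    (F : ((Fin n ⊕ Fin n) → ℝ) → ((Fin n ⊕ Fin n) → ℝ))
    (a : ((Fin n ⊕ Fin n) → ℝ) → ((Fin n ⊕ Fin n) → ℝ))
    (S : ((Fin n ⊕ Fin n) → ℝ) → ℝ)
    (hF : ContDiff ℝ 2 F) (ha : ContDiff ℝ 2 a) (hS : ContDiff ℝ 1 S)
    (hFper : ∀ (z : (Fin n ⊕ Fin n) → ℝ) (e : Fin n → ℤ),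
      F (z + Sum.elim (fun i => (e i : ℝ)) fun _ => 0) =
        F z + Sum.elim (fun i => (e i : ℝ)) fun _ => 0)
    (haper : ∀ (z : (Fin n ⊕ Fin n) → ℝ) (e : Fin n → ℤ),
      a (z + Sum.elim (fun i => (e i : ℝ)) fun _ => 0) = a z)
    (hSper : ∀ (z : (Fin n ⊕ Fin n) → ℝ) (e : Fin n → ℤ),
      S (z + Sum.elim (fun i => (e i : ℝ)) fun _ => 0) = S z)
    -- `S` is a primitive function of `F`: `DS(z) = a(F(z))ᵀ DF(z) − a(z)ᵀ`
    (hexact : ∀ (z : (Fin n ⊕ Fin n) → ℝ) (w : (Fin n ⊕ Fin n) → ℝ),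
      fderiv ℝ S z w = (∑ i, a (F z) i * fderiv ℝ F z w i) - ∑ i, a z i * w i)
    (K : (Fin n → ℝ) → ((Fin n ⊕ Fin n) → ℝ)) (hK : ContDiff ℝ 2 K)
    (hKper : ∀ (θ : Fin n → ℝ) (e : Fin n → ℤ),
      K (θ + fun i => (e i : ℝ)) = K θ + Sum.elim (fun i => (e i : ℝ)) fun _ => 0)
    (ω : Fin n → ℝ)
    (E : (Fin n → ℝ) → ((Fin n ⊕ Fin n) → ℝ)) (hE : ∀ θ, E θ = F (K θ) - K (θ + ω))
    (Δa Δ2a : (Fin n → ℝ) → ((Fin n ⊕ Fin n) → ℝ))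
    (hΔa : ∀ θ, Δa θ = a (F (K θ)) - a (K (θ + ω)))
    (hΔ2a : ∀ θ, Δ2a θ = Δa θ - jacM a (K (θ + ω)) *ᵥ E θ) :
    (∫ θ in Set.Icc (0 : Fin n → ℝ) 1,
        (jacM K (θ + ω))ᵀ *ᵥ (((jacM a (K (θ + ω)))ᵀ - jacM a (K (θ + ω))) *ᵥ E θ))
      = ∫ θ in Set.Icc (0 : Fin n → ℝ) 1,
          ((jacM E θ)ᵀ *ᵥ Δa θ + (jacM K (θ + ω))ᵀ *ᵥ Δ2a θ) :=
  exactness_average_identity_general n F a S hF ha hS hFper haper hSper hexact K hK hKper ω E hE Δa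
    Δ2a hΔa hΔ2a
end
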